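/- arXiv:1012.0012 — 9 statements merged into one kernel-verified Lean document; each statement's English description precedes it below -/
import Mathlib

section
/- If a and b are twins in a graph G (i.e. N[a] = N[b]), then the domination number of G equals the domination number of G − a. -/
/-- `D` is a dominating set of `G`: every vertex is in `D` or adjacent to a vertex of `D`. -/
def Dominating {V : Type*} (G : SimpleGraph V) (D : Set V) : Prop :=
  ∀ v, v ∈ D ∨ ∃ u ∈ D, G.Adj u v

/-- The domination number: minimum size of a dominating set. -/
noncomputable def domNum {V : Type*} (G : SimpleGraph V) : ℕ :=
  sInf {n | ∃ D : Set V, D.Finite ∧ D.ncard = n ∧ Dominating G D}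

/-- If `a` and `b` are twins (adjacent with equal closed neighborhoods) in a finite graph `G`,
then the domination number of `G` equals that of `G - a`. -/
theorem stmt0 {V : Type*} [Fintype V] (G : SimpleGraph V) (a b : V) (hab : a ≠ b)
    (hadj : G.Adj a b)
    (htwin : insert a (G.neighborSet a) = insert b (G.neighborSet b)) :
    domNum G = domNum (G.induce {v | v ≠ a}) := by
  classical
  -- key twin facts
  have h1 : ∀ v, G.Adj a v → v = b ∨ G.Adj b v := by
    intro v hv
    have : v ∈ insert b (G.neighborSet b) := by
      rw [← htwin]; exact Set.mem_insert_of_mem _ hv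
    rcases this with h | h
    · exact Or.inl h
    · exact Or.inr h
  have h2 : ∀ u, G.Adj u b → u ≠ a → G.Adj u a := by
    intro u hu hua
    have : u ∈ insert a (G.neighborSet a) := by
      rw [htwin]; exact Set.mem_insert_of_mem _ hu.symm
    rcases this with h | h
    · exact absurd h hua
    · exact h.symm
  set S := {n | ∃ D : Set V, D.Finite ∧ D.ncard = n ∧ Dominating G D} with hS
  set T := {n | ∃ D : Set ↑{v | v ≠ a}, D.Finite ∧ D.ncard = n ∧
      Dominating (G.induce {v | v ≠ a}) D} with hT
  have hSne : S.Nonempty :=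
    ⟨(Set.univ : Set V).ncard, Set.univ, Set.finite_univ, rfl,
      fun v => Or.inl (Set.mem_univ v)⟩
  have hTne : T.Nonempty :=
    ⟨(Set.univ : Set ↑{v | v ≠ a}).ncard, Set.univ, Set.finite_univ, rfl,
      fun v => Or.inl (Set.mem_univ v)⟩
  have le1 : sInf T ≤ sInf S := by
    obtain ⟨D, hfin, hcard, hdom⟩ := Nat.sInf_mem hSne
    set g : V → ↑{v | v ≠ a} := fun v =>
      if h : v = a then ⟨b, hab.symm⟩ else ⟨v, h⟩ with hg
    have hdom' : Dominating (G.induce {v | v ≠ a}) (g '' D) := by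
      rintro ⟨v, hv⟩
      have hv' : v ≠ a := hv
      rcases hdom v with hvD | ⟨u, huD, hadjuv⟩
      · left
        refine ⟨v, hvD, ?_⟩
        simp [hg, dif_neg hv']
      · by_cases hu : u = a
        · subst hu
          rcases h1 v hadjuv with hvb | hbv
          · left
            refine ⟨u, huD, ?_⟩
            simp only [hg, dif_pos rfl]
            exact Subtype.ext hvb.symm
          · right
            refine ⟨g u, ⟨u, huD, rfl⟩, ?_⟩
            simpa [hg] using hbv
        · right
          refine ⟨g u, ⟨u, huD, rfl⟩, ?_⟩
          simpa [hg, dif_neg hu] using hadjuv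
    have hmem : (g '' D).ncard ∈ T := ⟨g '' D, hfin.image g, rfl, hdom'⟩
    calc sInf T ≤ (g '' D).ncard := Nat.sInf_le hmem
      _ ≤ D.ncard := Set.ncard_image_le hfin
      _ = sInf S := hcard
  have le2 : sInf S ≤ sInf T := by
    obtain ⟨D, hfin, hcard, hdom⟩ := Nat.sInf_mem hTne
    have hdom' : Dominating G (Subtype.val '' D) := by
      intro v
      by_cases hv : v = a
      · subst hv
        rcases hdom ⟨b, hab.symm⟩ with hbD | ⟨u, huD, hadjub⟩
        · right
          exact ⟨b, ⟨⟨b, hab.symm⟩, hbD, rfl⟩, hadj.symm⟩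
        · right
          have : G.Adj u.1 b := hadjub
          exact ⟨u.1, ⟨u, huD, rfl⟩, h2 u.1 this u.2⟩
      · rcases hdom ⟨v, hv⟩ with hvD | ⟨u, huD, hadjuv⟩
        · left; exact ⟨⟨v, hv⟩, hvD, rfl⟩
        · right
          exact ⟨u.1, ⟨u, huD, rfl⟩, hadjuv⟩
    have hmem : (Subtype.val '' D).ncard ∈ S :=
      ⟨Subtype.val '' D, hfin.image _, rfl, hdom'⟩
    calc sInf S ≤ (Subtype.val '' D).ncard := Nat.sInf_le hmem
      _ = D.ncard := Set.ncard_image_of_injective _ Subtype.val_injective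
      _ = sInf T := hcard
  exact le_antisymm le2 le1
end

section
/- If a and b are twins in a graph G, then the connected domination number of G equals the connected domination number of G − a. -/
/-- `D` is a connected dominating set of `G`: a dominating set inducing a connected subgraph. -/
def ConnDominating {V : Type*} (G : SimpleGraph V) (D : Set V) : Prop :=
  Dominating G D ∧ (G.induce D).Connected

/-- The connected domination number: minimum size of a connected dominating set. -/
noncomputable def connDomNum {V : Type*} (G : SimpleGraph V) : ℕ :=
  sInf {n | ∃ D : Set V, D.Finite ∧ D.ncard = n ∧ ConnDominating G D}

lemma reach_of_walk {α β : Type*} {G : SimpleGraph α} {H : SimpleGraph β} (f : α → β)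
    (hf : ∀ u v, G.Adj u v → f u = f v ∨ H.Adj (f u) (f v)) :
    ∀ {x y : α}, G.Walk x y → H.Reachable (f x) (f y) := by
  intro x y w
  induction w with
  | nil => exact SimpleGraph.Reachable.refl _
  | cons h p ih =>
    rcases hf _ _ h with e | hadj
    · rw [e]; exact ih
    · exact hadj.reachable.trans ih

lemma key_adj {V : Type*} [DecidableEq V] {G : SimpleGraph V} {a b : V}
    (htw1 : ∀ v, G.Adj a v → v = b ∨ G.Adj b v) :
    ∀ u v, G.Adj u v → (fun x => if x = a then b else x) u = (fun x => if x = a then b else x) v ∨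
      G.Adj ((fun x => if x = a then b else x) u) ((fun x => if x = a then b else x) v) := by
  intro u v huv
  simp only
  by_cases hu : u = a
  · have hv : v ≠ a := fun h => G.irrefl (h ▸ hu ▸ huv)
    rw [if_pos hu, if_neg hv]
    rcases htw1 v (hu ▸ huv) with h | h
    · exact Or.inl h.symm
    · exact Or.inr h
  · by_cases hv : v = a
    · rw [if_neg hu, if_pos hv]
      rcases htw1 u ((hv ▸ huv).symm) with h | h
      · exact Or.inl h
      · exact Or.inr h.symm
    · rw [if_neg hu, if_neg hv]
      exact Or.inr huv

lemma transferA {V : Type*} [Fintype V] [DecidableEq V] (G : SimpleGraph V) (a b : V) (hab : a ≠ b)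
    (hadj : G.Adj a b) (htw1 : ∀ v, G.Adj a v → v = b ∨ G.Adj b v)
    (D : Set V) (hD : ConnDominating G D) :
    ∃ D' : Set ↥{v : V | v ≠ a}, D'.ncard ≤ D.ncard ∧
      ConnDominating (G.induce {v | v ≠ a}) D' := by
  classical
  set f : V → V := fun x => if x = a then b else x with hf
  have hfa : ∀ z, f z ≠ a := by
    intro z hz
    by_cases h : z = a
    · exact hab.symm (by simpa [hf, h] using hz)
    · exact h (by simpa [hf, h] using hz)
  set E : Set V := f '' D with hE
  have hEa : ∀ u ∈ E, u ≠ a := by rintro u ⟨d, _, rfl⟩; exact hfa d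
  have hdomE : ∀ v, v ∈ E ∨ ∃ u ∈ E, G.Adj u v := by
    intro v
    rcases hD.1 v with hv | ⟨u, hu, huv⟩
    · by_cases h : v = a
      · exact Or.inr ⟨b, ⟨a, h ▸ hv, by simp [hf]⟩, h ▸ hadj.symm⟩
      · exact Or.inl ⟨v, hv, by simp [hf, h]⟩
    · by_cases h : u = a
      · have hbE : b ∈ E := ⟨a, h ▸ hu, by simp [hf]⟩
        rcases htw1 v (h ▸ huv) with h2 | h2
        · exact Or.inl (h2 ▸ hbE)
        · exact Or.inr ⟨b, hbE, h2⟩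
      · exact Or.inr ⟨u, ⟨u, hu, by simp [hf, h]⟩, huv⟩
  refine ⟨{x | x.1 ∈ E}, ?_, ?_, ?_⟩
  · have h1 : Subtype.val '' {x : ↥{v : V | v ≠ a} | x.1 ∈ E} = E := by
      ext z
      constructor
      · rintro ⟨x, hx, rfl⟩; exact hx
      · intro hz; exact ⟨⟨z, hEa z hz⟩, hz, rfl⟩
    have h2 := Set.ncard_image_of_injective {x : ↥{v : V | v ≠ a} | x.1 ∈ E}
      Subtype.val_injective
    rw [h1] at h2
    rw [← h2]
    exact Set.ncard_image_le D.toFinite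
  · intro v
    rcases hdomE v.1 with hv | ⟨u, hu, huv⟩
    · exact Or.inl hv
    · exact Or.inr ⟨⟨u, hEa u hu⟩, hu, huv⟩
  · -- connectedness
    have hDconn := hD.2
    have hne : Nonempty ↥D := hDconn.nonempty
    have hne2 : Nonempty ↥{x : ↥{v : V | v ≠ a} | x.1 ∈ E} := by
      obtain ⟨⟨d, hd⟩⟩ := hne
      exact ⟨⟨⟨f d, hfa d⟩, ⟨d, hd, rfl⟩⟩⟩
    rw [SimpleGraph.connected_iff]
    refine ⟨?_, hne2⟩
    rintro ⟨⟨x, hxa⟩, hx⟩ ⟨⟨y, hya⟩, hy⟩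
    obtain ⟨dx, hdx, hdx2⟩ := hx
    obtain ⟨dy, hdy, hdy2⟩ := hy
    obtain ⟨w⟩ := hDconn ⟨dx, hdx⟩ ⟨dy, hdy⟩
    have hreach := reach_of_walk
      (G := G.induce D) (H := (G.induce {v | v ≠ a}).induce {x | x.1 ∈ E})
      (fun z => ⟨⟨f z.1, hfa z.1⟩, ⟨z.1, z.2, rfl⟩⟩)
      (by
        intro u v huv
        rcases key_adj htw1 u.1 v.1 huv with h | h
        · exact Or.inl (by ext; exact h)
        · exact Or.inr h) w
    have ex : (⟨⟨f dx, hfa dx⟩, ⟨dx, hdx, rfl⟩⟩ :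
        ↥{x : ↥{v : V | v ≠ a} | x.1 ∈ E}) = ⟨⟨x, hxa⟩, ⟨dx, hdx, hdx2⟩⟩ := by
      ext; exact hdx2
    have ey : (⟨⟨f dy, hfa dy⟩, ⟨dy, hdy, rfl⟩⟩ :
        ↥{x : ↥{v : V | v ≠ a} | x.1 ∈ E}) = ⟨⟨y, hya⟩, ⟨dy, hdy, hdy2⟩⟩ := by
      ext; exact hdy2
    exact ex ▸ ey ▸ hreach

lemma transferB {V : Type*} [Fintype V] (G : SimpleGraph V) (a b : V) (hab : a ≠ b)
    (hadj : G.Adj a b) (htw2 : ∀ v, G.Adj b v → v = a ∨ G.Adj a v)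
    (D' : Set ↥{v : V | v ≠ a}) (hD' : ConnDominating (G.induce {v | v ≠ a}) D') :
    ∃ D : Set V, D.ncard = D'.ncard ∧ ConnDominating G D := by
  classical
  set D : Set V := Subtype.val '' D' with hDdef
  refine ⟨D, Set.ncard_image_of_injective _ Subtype.val_injective, ?_, ?_⟩
  · -- dominating
    intro v
    by_cases hva : v = a
    · subst hva
      rcases hD'.1 ⟨b, hab.symm⟩ with hb | ⟨u, hu, huv⟩
      · exact Or.inr ⟨b, ⟨⟨b, hab.symm⟩, hb, rfl⟩, hadj.symm⟩
      · -- G.Adj u.1 b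
        rcases htw2 u.1 (huv.symm : G.Adj b u.1) with h | h
        · exact absurd h u.2
        · exact Or.inr ⟨u.1, ⟨u, hu, rfl⟩, h.symm⟩
    · rcases hD'.1 ⟨v, hva⟩ with hv | ⟨u, hu, huv⟩
      · exact Or.inl ⟨⟨v, hva⟩, hv, rfl⟩
      · exact Or.inr ⟨u.1, ⟨u, hu, rfl⟩, huv⟩
  · -- connected
    have hconn' := hD'.2
    have hne : Nonempty ↥D' := hconn'.nonempty
    have hne2 : Nonempty ↥D := by
      obtain ⟨⟨d, hd⟩⟩ := hne
      exact ⟨⟨d.1, d, hd, rfl⟩⟩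
    rw [SimpleGraph.connected_iff]
    refine ⟨?_, hne2⟩
    rintro ⟨x, hx⟩ ⟨y, hy⟩
    obtain ⟨dx, hdx, hdx2⟩ := hx
    obtain ⟨dy, hdy, hdy2⟩ := hy
    obtain ⟨w⟩ := hconn' ⟨dx, hdx⟩ ⟨dy, hdy⟩
    have hreach := reach_of_walk
      (G := (G.induce {v | v ≠ a}).induce D') (H := G.induce D)
      (fun z => ⟨z.1.1, ⟨z.1, z.2, rfl⟩⟩)
      (by
        intro u v huv
        exact Or.inr huv) w
    have ex : (⟨dx.1, ⟨dx, hdx, rfl⟩⟩ : ↥D) = ⟨x, ⟨dx, hdx, hdx2⟩⟩ := by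
      ext; exact hdx2
    have ey : (⟨dy.1, ⟨dy, hdy, rfl⟩⟩ : ↥D) = ⟨y, ⟨dy, hdy, hdy2⟩⟩ := by
      ext; exact hdy2
    exact ex ▸ ey ▸ hreach

/-- If `a` and `b` are twins (`N[a] = N[b]`) in a finite connected graph `G` with at least
3 vertices, then the connected domination number of `G` equals that of `G - a`. -/
theorem stmt1 {V : Type*} [Fintype V] (G : SimpleGraph V) (hconn : G.Connected)
    (hcard : 3 ≤ Fintype.card V) (a b : V) (hab : a ≠ b)
    (htwin : insert a (G.neighborSet a) = insert b (G.neighborSet b)) :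
    connDomNum G = connDomNum (G.induce {v | v ≠ a}) := by
  classical
  have hmem : ∀ v, (v = a ∨ G.Adj a v) ↔ (v = b ∨ G.Adj b v) := by
    intro v
    have := Set.ext_iff.mp htwin v
    simpa [Set.mem_insert_iff, SimpleGraph.mem_neighborSet] using this
  have hadj : G.Adj a b := by
    rcases (hmem b).mpr (Or.inl rfl) with h | h
    · exact absurd h.symm hab
    · exact h
  have htw1 : ∀ v, G.Adj a v → v = b ∨ G.Adj b v := fun v h => (hmem v).mp (Or.inr h)
  have htw2 : ∀ v, G.Adj b v → v = a ∨ G.Adj a v := fun v h => (hmem v).mpr (Or.inr h)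
  -- univ is a connected dominating set of G
  have huniv : ConnDominating G Set.univ := by
    refine ⟨fun v => Or.inl trivial, ?_⟩
    have hne : Nonempty ↥(Set.univ : Set V) := ⟨⟨hconn.nonempty.some, trivial⟩⟩
    rw [SimpleGraph.connected_iff]
    refine ⟨?_, hne⟩
    rintro ⟨x, hx⟩ ⟨y, hy⟩
    obtain ⟨w⟩ := hconn x y
    exact reach_of_walk (G := G) (H := G.induce Set.univ)
      (fun v => ⟨v, trivial⟩) (fun u v huv => Or.inr huv) w
  have hSne : Set.Nonempty {n | ∃ D : Set V, D.Finite ∧ D.ncard = n ∧ ConnDominating G D} :=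
    ⟨(Set.univ : Set V).ncard, Set.univ, Set.toFinite _, rfl, huniv⟩
  obtain ⟨E', hE'le, hE'⟩ := transferA G a b hab hadj htw1 Set.univ huniv
  have hS'ne : Set.Nonempty {n | ∃ D : Set ↥{v : V | v ≠ a}, D.Finite ∧ D.ncard = n ∧
      ConnDominating (G.induce {v | v ≠ a}) D} :=
    ⟨E'.ncard, E', Set.toFinite _, rfl, hE'⟩
  unfold connDomNum
  apply le_antisymm
  · obtain ⟨D', hD'fin, hD'card, hD'⟩ := Nat.sInf_mem hS'ne
    obtain ⟨D, hDcard, hD⟩ := transferB G a b hab hadj htw2 D' hD'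
    calc sInf {n | ∃ D : Set V, D.Finite ∧ D.ncard = n ∧ ConnDominating G D}
        ≤ D.ncard := Nat.sInf_le ⟨D, Set.toFinite _, rfl, hD⟩
      _ = D'.ncard := hDcard
      _ = _ := hD'card
  · obtain ⟨D, hDfin, hDcard, hD⟩ := Nat.sInf_mem hSne
    obtain ⟨D', hD'le, hD'⟩ := transferA G a b hab hadj htw1 D hD
    calc sInf {n | ∃ D : Set ↥{v : V | v ≠ a}, D.Finite ∧ D.ncard = n ∧
          ConnDominating (G.induce {v | v ≠ a}) D}
        ≤ D'.ncard := Nat.sInf_le ⟨D', Set.toFinite _, rfl, hD'⟩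
      _ ≤ D.ncard := hD'le
      _ = _ := hDcard
end

section
/- Let G be a claw-free graph and let D be a minimal dominating set of G that is not independent. Then there exists a dominating set D' of G with |D'| ≤ |D| and strictly fewer edges within D'. Consequently, the independent domination number i(G) equals the domination number γ(G) for claw-free graphs. -/
/-- A graph is claw-free if no vertex has three pairwise nonadjacent neighbors. -/
def ClawFree {V : Type*} (G : SimpleGraph V) : Prop :=
  ∀ a b c d : V, G.Adj a b → G.Adj a c → G.Adj a d → b ≠ c → b ≠ d → c ≠ d →
    G.Adj b c ∨ G.Adj b d ∨ G.Adj c d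

/-- The independent domination number: minimum size of a dominating set that is independent. -/
noncomputable def indDomNum {V : Type*} (G : SimpleGraph V) : ℕ :=
  sInf {n | ∃ D : Set V, D.Finite ∧ D.ncard = n ∧ Dominating G D ∧
    ∀ u ∈ D, ∀ v ∈ D, ¬ G.Adj u v}

/-- The number of (ordered) adjacent pairs within a set `D`, measuring edges inside `D`. -/
def innerPairs {V : Type*} [DecidableEq V] (G : SimpleGraph V) [DecidableRel G.Adj]
    (D : Finset V) : ℕ :=
  ((D ×ˢ D).filter (fun p => G.Adj p.1 p.2)).card

section Helpers

variable {V : Type*} [DecidableEq V] (G : SimpleGraph V) [DecidableRel G.Adj]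

lemma innerPairs_mono {D' D : Finset V} (h : D' ⊆ D) : innerPairs G D' ≤ innerPairs G D :=
  Finset.card_le_card (Finset.filter_subset_filter _ (Finset.product_subset_product h h))

lemma key (hclaw : ClawFree G) (D : Finset V) (hD : Dominating G ↑D)
    (hmin : ∀ D' ⊆ D, Dominating G ↑D' → D' = D)
    (hne : ∃ u ∈ D, ∃ v ∈ D, G.Adj u v) :
    ∃ D' : Finset V, Dominating G ↑D' ∧ D'.card ≤ D.card ∧
      innerPairs G D' < innerPairs G D := by
  obtain ⟨u, hu, v, hv, huv⟩ := hne
  have huv_ne : u ≠ v := G.ne_of_adj huv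
  set E := D.erase v with hE
  have hEsub : E ⊆ D := Finset.erase_subset _ _
  have hEne : E ≠ D := fun h => Finset.notMem_erase v D
    (show v ∈ D.erase v from by rw [← hE, h]; exact hv)
  have hEnotdom : ¬ Dominating G ↑E := fun h => hEne (hmin E hEsub h)
  rw [Dominating] at hEnotdom
  push_neg at hEnotdom
  obtain ⟨w, hwE, hwadj⟩ := hEnotdom
  have hwadj' : ∀ x ∈ E, ¬ G.Adj x w := fun x hx => hwadj x (by simpa using hx)
  have huE : u ∈ E := Finset.mem_erase.2 ⟨huv_ne, hu⟩
  have hwD : w ∉ D := by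
    intro hwD'
    rcases eq_or_ne w v with rfl | hne
    · exact hwadj' u huE huv
    · exact hwE (by simp [hE, hwD', hne])
  have hvw : G.Adj v w := by
    rcases hD w with hw | ⟨x, hx, hxw⟩
    · exact absurd hw (by simpa using hwD)
    · rcases eq_or_ne x v with rfl | hne
      · exact hxw
      · exact absurd hxw (hwadj' x (Finset.mem_erase.2 ⟨hne, by simpa using hx⟩))
  have hwE' : w ∉ E := fun h => hwD (hEsub h)
  have huw : u ≠ w := fun h => hwD (h ▸ hu)
  refine ⟨insert w E, ?_, ?_, ?_⟩
  · -- dominating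
    intro y
    by_cases hyE : y ∈ E
    · left; simp [hyE]
    by_cases hyadj : ∃ x ∈ E, G.Adj x y
    · obtain ⟨x, hx, hxy⟩ := hyadj
      right; exact ⟨x, by simp [hx], hxy⟩
    rcases eq_or_ne y v with rfl | hyv
    · right; exact ⟨w, by simp, hvw.symm⟩
    rcases eq_or_ne y w with rfl | hyw
    · left; simp
    push_neg at hyadj
    have hyD : y ∉ D := fun h => hyE (Finset.mem_erase.2 ⟨hyv, h⟩)
    have hvy : G.Adj v y := by
      rcases hD y with hy | ⟨x, hx, hxy⟩
      · exact absurd hy (by simpa using hyD)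
      · rcases eq_or_ne x v with rfl | hne
        · exact hxy
        · exact absurd hxy (hyadj x (Finset.mem_erase.2 ⟨hne, by simpa using hx⟩))
    have huy : u ≠ y := fun h => hyD (h ▸ hu)
    have hwy : G.Adj w y := by
      rcases hclaw v u w y huv.symm hvw hvy huw huy hyw.symm with h | h | h
      · exact absurd h (hwadj' u huE)
      · exact absurd h (hyadj u huE)
      · exact h
    right; exact ⟨w, by simp, hwy⟩
  · -- card
    have hpos : 0 < D.card := Finset.card_pos.2 ⟨v, hv⟩
    rw [Finset.card_insert_of_notMem hwE', hE, Finset.card_erase_of_mem hv]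
    omega
  · -- innerPairs
    have h1 : innerPairs G (insert w E) = innerPairs G E := by
      unfold innerPairs
      congr 1
      ext ⟨a, b⟩
      simp only [Finset.mem_filter, Finset.mem_product, Finset.mem_insert]
      constructor
      · rintro ⟨⟨(rfl | ha), (rfl | hb)⟩, hab⟩
        · exact absurd hab (G.irrefl)
        · exact absurd hab.symm (hwadj' b hb)
        · exact absurd hab (hwadj' a ha)
        · exact ⟨⟨ha, hb⟩, hab⟩
      · rintro ⟨⟨ha, hb⟩, hab⟩
        exact ⟨⟨Or.inr ha, Or.inr hb⟩, hab⟩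
    have h2 : innerPairs G E < innerPairs G D := by
      apply Finset.card_lt_card
      refine (Finset.ssubset_iff_of_subset
        (Finset.filter_subset_filter _ (Finset.product_subset_product hEsub hEsub))).2
        ⟨(u, v), ?_, ?_⟩
      · simp [hu, hv, huv]
      · exact fun h => Finset.notMem_erase v D
          (Finset.mem_product.1 (Finset.mem_filter.1 h).1).2
    omega

lemma exists_minimal (D : Finset V) (hD : Dominating G ↑D) :
    ∃ D₁, D₁ ⊆ D ∧ Dominating G ↑D₁ ∧ ∀ D' ⊆ D₁, Dominating G ↑D' → D' = D₁ := by
  induction D using Finset.strongInduction with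
  | _ D IH =>
    by_cases h : ∀ D' ⊆ D, Dominating G ↑D' → D' = D
    · exact ⟨D, subset_rfl, hD, h⟩
    · push_neg at h
      obtain ⟨D', hsub, hdom, hne⟩ := h
      obtain ⟨D₁, h1, h2, h3⟩ := IH D' (ssubset_of_subset_of_ne hsub hne) hdom
      exact ⟨D₁, h1.trans hsub, h2, h3⟩

lemma toIndep (hclaw : ClawFree G) :
    ∀ n (D : Finset V), innerPairs G D ≤ n → Dominating G ↑D →
    ∃ D₀ : Finset V, Dominating G ↑D₀ ∧ D₀.card ≤ D.card ∧
      ∀ x ∈ D₀, ∀ y ∈ D₀, ¬ G.Adj x y := by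
  intro n
  induction n with
  | zero =>
    intro D hip hD
    obtain ⟨D₁, hsub, hdom, hmin⟩ := exists_minimal G D hD
    by_cases hind : ∀ x ∈ D₁, ∀ y ∈ D₁, ¬ G.Adj x y
    · exact ⟨D₁, hdom, Finset.card_le_card hsub, hind⟩
    · push_neg at hind
      obtain ⟨x, hx, y, hy, hxy⟩ := hind
      obtain ⟨D', _, _, hlt⟩ := key G hclaw D₁ hdom hmin ⟨x, hx, y, hy, hxy⟩
      have := innerPairs_mono G hsub
      omega
  | succ n IH =>
    intro D hip hD
    obtain ⟨D₁, hsub, hdom, hmin⟩ := exists_minimal G D hD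
    by_cases hind : ∀ x ∈ D₁, ∀ y ∈ D₁, ¬ G.Adj x y
    · exact ⟨D₁, hdom, Finset.card_le_card hsub, hind⟩
    · push_neg at hind
      obtain ⟨x, hx, y, hy, hxy⟩ := hind
      obtain ⟨D', hdom', hcard', hlt⟩ := key G hclaw D₁ hdom hmin ⟨x, hx, y, hy, hxy⟩
      have hm := innerPairs_mono G hsub
      obtain ⟨D₀, h1, h2, h3⟩ := IH D' (by omega) hdom'
      exact ⟨D₀, h1, h2.trans (hcard'.trans (Finset.card_le_card hsub)), h3⟩

lemma eq_part {V : Type*} [Fintype V] [DecidableEq V] (G : SimpleGraph V)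
    [DecidableRel G.Adj] (hclaw : ClawFree G) :
    (sInf {n | ∃ D : Set V, D.Finite ∧ D.ncard = n ∧ Dominating G D ∧
      ∀ u ∈ D, ∀ v ∈ D, ¬ G.Adj u v}) =
    sInf {n | ∃ D : Set V, D.Finite ∧ D.ncard = n ∧ Dominating G D} := by
  have hudom : Dominating G (Set.univ : Set V) := fun v => Or.inl trivial
  have hne : {n | ∃ D : Set V, D.Finite ∧ D.ncard = n ∧ Dominating G D}.Nonempty :=
    ⟨(Set.univ : Set V).ncard, Set.univ, Set.finite_univ, rfl, hudom⟩
  obtain ⟨Dm, hfin, hcard, hdom⟩ := Nat.sInf_mem hne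
  set F := hfin.toFinset with hF
  have hFcoe : (↑F : Set V) = Dm := hfin.coe_toFinset
  have hFdom : Dominating G ↑F := hFcoe ▸ hdom
  have hFcard : F.card = Dm.ncard := (Set.ncard_eq_toFinset_card Dm hfin).symm
  obtain ⟨D₀, h1, h2, h3⟩ := toIndep G hclaw (innerPairs G F) F le_rfl hFdom
  apply le_antisymm
  · refine le_trans (Nat.sInf_le ⟨↑D₀, D₀.finite_toSet, Set.ncard_coe_finset D₀,
        h1, fun u hu v hv => h3 u (by exact_mod_cast hu) v (by exact_mod_cast hv)⟩) ?_
    rw [← hcard, ← hFcard]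
    exact h2
  · have hne2 : {n | ∃ D : Set V, D.Finite ∧ D.ncard = n ∧ Dominating G D ∧
        ∀ u ∈ D, ∀ v ∈ D, ¬ G.Adj u v}.Nonempty :=
      ⟨D₀.card, ↑D₀, D₀.finite_toSet, Set.ncard_coe_finset D₀, h1,
        fun u hu v hv => h3 u (by exact_mod_cast hu) v (by exact_mod_cast hv)⟩
    obtain ⟨Di, hfi, hci, hdi, _⟩ := Nat.sInf_mem hne2
    exact Nat.sInf_le ⟨Di, hfi, hci, hdi⟩


end Helpers

/-- In a claw-free graph, any minimal dominating set that is not independent can be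
replaced by a dominating set of at most the same size with strictly fewer internal edges;
consequently, the independent domination number equals the domination number. -/
theorem stmt4 {V : Type*} [Fintype V] [DecidableEq V] (G : SimpleGraph V)
    [DecidableRel G.Adj] (hclaw : ClawFree G) :
    (∀ D : Finset V, Dominating G ↑D →
      (∀ D' ⊆ D, Dominating G ↑D' → D' = D) →
      (∃ u ∈ D, ∃ v ∈ D, G.Adj u v) →
      ∃ D' : Finset V, Dominating G ↑D' ∧ D'.card ≤ D.card ∧
        innerPairs G D' < innerPairs G D) ∧
    indDomNum G = domNum G := by
  constructor
  · exact fun D hD hmin hne => key G hclaw D hD hmin hne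
  · exact eq_part G hclaw
end

section
/- Let G be a connected graph that admits no 1-join, and let (A₁, A₂, B₁, B₂) with partition (V₁, V₂) be a 2-join of G. Then G[V₁] and G[V₂] are connected. -/
/-- `(V₁, V₂)` with connecting cliques `A₁ ⊆ V₁`, `A₂ ⊆ V₂` is a 1-join of `G`. -/
def Is1Join {V : Type*} (G : SimpleGraph V) (V1 V2 A1 A2 : Set V) : Prop :=
  V1 ∪ V2 = Set.univ ∧ Disjoint V1 V2 ∧ A1 ⊆ V1 ∧ A2 ⊆ V2 ∧
  G.IsClique (A1 ∪ A2) ∧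
  (∀ u ∈ V1 \ A1, ∀ v ∈ V2, ¬ G.Adj u v) ∧
  (∀ u ∈ V2 \ A2, ∀ v ∈ V1, ¬ G.Adj u v) ∧
  A1.Nonempty ∧ A2.Nonempty ∧ (V1 \ A1).Nonempty ∧ (V2 \ A2).Nonempty

/-- `(A₁, A₂, B₁, B₂)` with partition `(V₁, V₂)` is a 2-join of `G`. -/
def Is2Join {V : Type*} (G : SimpleGraph V) (V1 V2 A1 B1 A2 B2 : Set V) : Prop :=
  V1 ∪ V2 = Set.univ ∧ Disjoint V1 V2 ∧
  A1 ⊆ V1 ∧ B1 ⊆ V1 ∧ Disjoint A1 B1 ∧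
  A2 ⊆ V2 ∧ B2 ⊆ V2 ∧ Disjoint A2 B2 ∧
  G.IsClique (A1 ∪ A2) ∧ G.IsClique (B1 ∪ B2) ∧
  (∀ u ∈ V1, ∀ v ∈ V2, G.Adj u v → (u ∈ A1 ∧ v ∈ A2) ∨ (u ∈ B1 ∧ v ∈ B2)) ∧
  A1.Nonempty ∧ B1.Nonempty ∧ (V1 \ (A1 ∪ B1)).Nonempty ∧
  A2.Nonempty ∧ B2.Nonempty ∧ (V2 \ (A2 ∪ B2)).Nonempty

lemma is2Join_swapAB {V : Type*} {G : SimpleGraph V} {V1 V2 A1 B1 A2 B2 : Set V}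
    (h : Is2Join G V1 V2 A1 B1 A2 B2) : Is2Join G V1 V2 B1 A1 B2 A2 := by
  obtain ⟨h1,h2,h3,h4,h5,h6,h7,h8,h9,h10,h11,h12,h13,h14,h15,h16,h17⟩ := h
  refine ⟨h1,h2,h4,h3,h5.symm,h7,h6,h8.symm,h10,h9,
    fun u hu v hv ha => (h11 u hu v hv ha).symm, h13,h12, ?_, h16,h15, ?_⟩
  · rwa [Set.union_comm]
  · rwa [Set.union_comm]

lemma is2Join_swap12 {V : Type*} {G : SimpleGraph V} {V1 V2 A1 B1 A2 B2 : Set V}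
    (h : Is2Join G V1 V2 A1 B1 A2 B2) : Is2Join G V2 V1 A2 B2 A1 B1 := by
  obtain ⟨h1,h2,h3,h4,h5,h6,h7,h8,h9,h10,h11,h12,h13,h14,h15,h16,h17⟩ := h
  refine ⟨by rwa [Set.union_comm], h2.symm, h6,h7,h8,h3,h4,h5,
    by rwa [Set.union_comm], by rwa [Set.union_comm], ?_, h15,h16,h17,h12,h13,h14⟩
  intro u hu v hv ha
  rcases h11 v hv u hu ha.symm with ⟨hv1,hu1⟩|⟨hv1,hu1⟩
  · exact Or.inl ⟨hu1, hv1⟩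
  · exact Or.inr ⟨hu1, hv1⟩

lemma exists_oneJoin {V : Type*} {G : SimpleGraph V} {V1 V2 A1 B1 A2 B2 : Set V}
    (h : Is2Join G V1 V2 A1 B1 A2 B2) (S : Set V)
    (hSV : S ⊆ V1) (hAS : A1 ⊆ S) (hSB : ∀ v ∈ S, v ∉ B1)
    (hcl : ∀ u ∈ S, ∀ v ∈ V1, v ∉ S → ¬ G.Adj u v)
    (hne : (S \ A1).Nonempty) : Is1Join G S Sᶜ A1 A2 := by
  obtain ⟨h1,h2,h3,h4,h5,h6,h7,h8,h9,h10,h11,h12,h13,h14,h15,h16,h17⟩ := h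
  have hmem : ∀ v : V, v ∈ V1 ∨ v ∈ V2 := by
    intro v
    have := Set.mem_univ v
    rw [← h1] at this
    exact this
  have hA2c : A2 ⊆ Sᶜ := fun v hv hvS => Set.disjoint_left.mp h2 (hSV hvS) (h6 hv)
  refine ⟨Set.union_compl_self S, disjoint_compl_right, hAS, hA2c, h9, ?_, ?_,
    h12, h15, hne, ?_⟩
  · rintro u ⟨huS, huA⟩ v hv hadj
    rcases hmem v with hv1 | hv2
    · exact hcl u huS v hv1 hv hadj
    · rcases h11 u (hSV huS) v hv2 hadj with ⟨hu1,_⟩|⟨hu1,_⟩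
      · exact huA hu1
      · exact hSB u huS hu1
  · rintro u ⟨huC, huA⟩ v hvS hadj
    rcases hmem u with hu1 | hu2
    · exact hcl v hvS u hu1 huC hadj.symm
    · rcases h11 v (hSV hvS) u hu2 hadj.symm with ⟨_,hu1⟩|⟨hv1,_⟩
      · exact huA hu1
      · exact hSB v hvS hv1
  · obtain ⟨b, hb⟩ := h13
    exact ⟨b, fun hbS => hSB b hbS hb,
      fun hbA2 => Set.disjoint_left.mp h2 (h4 hb) (h6 hbA2)⟩

lemma induce_connected_of_no1join {V : Type*} {G : SimpleGraph V} (hconn : G.Connected)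
    (hno1 : ¬ ∃ V1 V2 A1 A2 : Set V, Is1Join G V1 V2 A1 A2)
    {V1 V2 A1 B1 A2 B2 : Set V} (hjoin : Is2Join G V1 V2 A1 B1 A2 B2) :
    (G.induce V1).Connected := by
  by_contra hnc
  obtain ⟨h1,h2,h3,h4,h5,h6,h7,h8,h9,h10,h11,h12,h13,h14,h15,h16,h17⟩ := id hjoin
  obtain ⟨a₀, ha₀⟩ := h12
  obtain ⟨b₀, hb₀⟩ := h13
  obtain ⟨x, hxV, hxAB⟩ := h14
  have hmem : ∀ v : V, v ∈ V1 ∨ v ∈ V2 := by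
    intro v
    have := Set.mem_univ v
    rw [← h1] at this
    exact this
  set R : V1 → Set V := fun y =>
    {v | ∃ hv : v ∈ V1, (G.induce V1).Reachable y ⟨v, hv⟩} with hRdef
  have hRV : ∀ y : V1, R y ⊆ V1 := fun y v hv => hv.1
  have hRself : ∀ y : V1, (y : V) ∈ R y := fun y => ⟨y.2, by exact SimpleGraph.Reachable.refl _⟩
  have hRadj : ∀ (y : V1), ∀ u ∈ R y, ∀ v, v ∈ V1 → G.Adj u v → v ∈ R y := by
    intro y u hu v hv hadj
    obtain ⟨hu1, hr⟩ := hu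
    refine ⟨hv, hr.trans (SimpleGraph.Adj.reachable ?_)⟩
    exact hadj
  have hcl : ∀ (y : V1), ∀ u ∈ R y, ∀ v ∈ V1, v ∉ R y → ¬ G.Adj u v := by
    intro y u hu v hv hvn hadj
    exact hvn (hRadj y u hu v hv hadj)
  have hiso : ∀ y : V1, (∀ a ∈ A1, a ∉ R y) → (∀ b ∈ B1, b ∉ R y) → False := by
    intro y hA hB
    have hstep : ∀ u ∈ R y, ∀ v, G.Adj u v → v ∈ R y := by
      intro u hu v hadj
      rcases hmem v with hv1 | hv2
      · exact hRadj y u hu v hv1 hadj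
      · rcases h11 u hu.1 v hv2 hadj with ⟨hu2,_⟩|⟨hu2,_⟩
        · exact absurd hu (hA u hu2)
        · exact absurd hu (hB u hu2)
    have hwalk : ∀ {u w : V} (_ : G.Walk u w), u ∈ R y → w ∈ R y := by
      intro u w p
      induction p with
      | nil => exact id
      | cons h p ih => exact fun hu => ih (hstep _ hu _ h)
    obtain ⟨p⟩ := hconn.preconnected (y : V) a₀
    exact hA a₀ ha₀ (hwalk p (hRself y))
  set a₁ : V1 := ⟨a₀, h3 ha₀⟩ with ha₁def
  set b₁ : V1 := ⟨b₀, h4 hb₀⟩ with hb₁def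
  have hA1R : A1 ⊆ R a₁ := by
    intro a ha
    by_cases hea : a = a₀
    · subst hea; exact hRself a₁
    · exact hRadj a₁ a₀ (hRself a₁) a (h3 ha)
        (h9 (Set.mem_union_left _ ha₀) (Set.mem_union_left _ ha) (fun he => hea he.symm))
  have hB1R : B1 ⊆ R b₁ := by
    intro b hb
    by_cases heb : b = b₀
    · subst heb; exact hRself b₁
    · exact hRadj b₁ b₀ (hRself b₁) b (h4 hb)
        (h10 (Set.mem_union_left _ hb₀) (Set.mem_union_left _ hb) (fun he => heb he.symm))
  have hnp : ¬ (G.induce V1).Preconnected := fun hp => hnc ((SimpleGraph.connected_iff _).mpr ⟨hp, ⟨a₁⟩⟩)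
  simp only [SimpleGraph.Preconnected, not_forall] at hnp
  obtain ⟨u, v, huv⟩ := hnp
  by_cases hR : (G.induce V1).Reachable a₁ b₁
  · -- both A1 and B1 in component of a₀; pick unreachable vertex
    have hB1Ra : B1 ⊆ R a₁ := by
      intro b hb
      obtain ⟨hb1, hr⟩ := hB1R hb
      exact ⟨hb1, hR.trans hr⟩
    have hc : ∃ c : V1, ¬ (G.induce V1).Reachable a₁ c := by
      by_cases hu' : (G.induce V1).Reachable a₁ u
      · exact ⟨v, fun hv' => huv (hu'.symm.trans hv')⟩
      · exact ⟨u, hu'⟩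
    obtain ⟨c, hc⟩ := hc
    refine hiso c ?_ ?_
    · intro a ha haR
      obtain ⟨ha1, hr1⟩ := haR
      obtain ⟨ha2, hr2⟩ := hA1R ha
      exact hc (hr2.trans hr1.symm)
    · intro b hb hbR
      obtain ⟨hb1, hr1⟩ := hbR
      obtain ⟨hb2, hr2⟩ := hB1Ra hb
      exact hc (hr2.trans hr1.symm)
  · have hB1nS : ∀ b ∈ B1, b ∉ R a₁ := by
      intro b hb hbR
      obtain ⟨hb1, hr1⟩ := hbR
      obtain ⟨hb2, hr2⟩ := hB1R hb
      exact hR (hr1.trans hr2.symm)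
    have hA1nT : ∀ a ∈ A1, a ∉ R b₁ := by
      intro a ha haR
      obtain ⟨ha1, hr1⟩ := haR
      obtain ⟨ha2, hr2⟩ := hA1R ha
      exact hR (hr2.trans hr1.symm)
    by_cases hxa : x ∈ R a₁
    · refine hno1 ⟨R a₁, (R a₁)ᶜ, A1, A2, exists_oneJoin hjoin (R a₁) (hRV a₁) hA1R
        (fun v hv hvB => hB1nS v hvB hv) (hcl a₁) ⟨x, hxa, fun h => hxAB (Or.inl h)⟩⟩
    · by_cases hxb : x ∈ R b₁
      · refine hno1 ⟨R b₁, (R b₁)ᶜ, B1, B2, exists_oneJoin (is2Join_swapAB hjoin) (R b₁)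
          (hRV b₁) hB1R (fun v hv hvA => hA1nT v hvA hv) (hcl b₁)
          ⟨x, hxb, fun h => hxAB (Or.inr h)⟩⟩
      · refine hiso ⟨x, hxV⟩ ?_ ?_
        · intro a ha haR
          obtain ⟨ha1, hr1⟩ := haR
          obtain ⟨ha2, hr2⟩ := hA1R ha
          exact hxa ⟨hxV, hr2.trans hr1.symm⟩
        · intro b hb hbR
          obtain ⟨hb1, hr1⟩ := hbR
          obtain ⟨hb2, hr2⟩ := hB1R hb
          exact hxb ⟨hxV, hr2.trans hr1.symm⟩

/-- If a connected graph admits no 1-join and `(A₁, A₂, B₁, B₂)` with partition `(V₁, V₂)`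
is a 2-join, then `G[V₁]` and `G[V₂]` are connected. -/
theorem stmt7 {V : Type*} [Fintype V] (G : SimpleGraph V) (hconn : G.Connected)
    (hno1 : ¬ ∃ V1 V2 A1 A2 : Set V, Is1Join G V1 V2 A1 A2)
    (V1 V2 A1 B1 A2 B2 : Set V) (hjoin : Is2Join G V1 V2 A1 B1 A2 B2) :
    (G.induce V1).Connected ∧ (G.induce V2).Connected :=
  ⟨induce_connected_of_no1join hconn hno1 hjoin,
   induce_connected_of_no1join hconn hno1 (is2Join_swap12 hjoin)⟩
end

section
/- Let G be a graph with a W-join (A, B) such that no vertex of A is complete to B and no vertex of B is complete to A. Let G' be the graph obtained from G by deleting all edges between A and B and then deleting all but one vertex a₀ from A and all but one vertex b₀ from B. Then γ(G) = γ(G'). -/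
lemma domNum_le_of_maps {V W : Type*} (G1 : SimpleGraph V) (G2 : SimpleGraph W)
    (hne : ∃ D : Set W, D.Finite ∧ Dominating G2 D)
    (h : ∀ D2 : Set W, D2.Finite → Dominating G2 D2 →
      ∃ D1 : Set V, D1.Finite ∧ Dominating G1 D1 ∧ D1.ncard ≤ D2.ncard) :
    domNum G1 ≤ domNum G2 := by
  have hne' : {n | ∃ D : Set W, D.Finite ∧ D.ncard = n ∧ Dominating G2 D}.Nonempty := by
    obtain ⟨D, hf, hd⟩ := hne
    exact ⟨D.ncard, D, hf, rfl, hd⟩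
  obtain ⟨D2, hf2, hc2, hd2⟩ := Nat.sInf_mem hne'
  obtain ⟨D1, hf1, hd1, hle⟩ := h D2 hf2 hd2
  calc domNum G1 ≤ D1.ncard := Nat.sInf_le ⟨D1, hf1, rfl, hd1⟩
    _ ≤ D2.ncard := hle
    _ = domNum G2 := hc2

/-- Let `(A, B)` be a W-join of `G` in which no vertex of `A` is complete to `B` and no
vertex of `B` is complete to `A`. Deleting all edges between `A` and `B` and keeping only
one vertex `a₀` of `A` and one vertex `b₀` of `B` preserves the domination number. -/
theorem stmt12 {V : Type*} [Fintype V] (G : SimpleGraph V) (A B : Set V)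
    (hdisj : Disjoint A B) (hAcl : G.IsClique A) (hBcl : G.IsClique B)
    (hhom : ∀ v : V, v ∉ A → v ∉ B →
      ((∀ a ∈ A, G.Adj v a) ∨ (∀ a ∈ A, ¬ G.Adj v a)) ∧
      ((∀ b ∈ B, G.Adj v b) ∨ (∀ b ∈ B, ¬ G.Adj v b)))
    (hsize : 2 ≤ A.ncard ∨ 2 ≤ B.ncard)
    (hnotcomp : ¬ ∀ a ∈ A, ∀ b ∈ B, G.Adj a b)
    (hnotanti : ¬ ∀ a ∈ A, ∀ b ∈ B, ¬ G.Adj a b)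
    (hA : ∀ a ∈ A, ¬ ∀ b ∈ B, G.Adj a b)
    (hB : ∀ b ∈ B, ¬ ∀ a ∈ A, G.Adj a b)
    (a0 : V) (ha0 : a0 ∈ A) (b0 : V) (hb0 : b0 ∈ B) :
    domNum G =
      domNum ((G.deleteEdges {e : Sym2 V | ∃ a ∈ A, ∃ b ∈ B, e = s(a, b)}).induce
        ({v : V | v ∉ A ∧ v ∉ B} ∪ {a0, b0})) := by
  classical
  set E : Set (Sym2 V) := {e : Sym2 V | ∃ a ∈ A, ∃ b ∈ B, e = s(a, b)} with hE
  set S : Set V := {v : V | v ∉ A ∧ v ∉ B} ∪ {a0, b0} with hSdef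
  set G' : SimpleGraph S := (G.deleteEdges E).induce S with hG'
  -- basic facts
  have factE : ∀ x y : V, s(x, y) ∈ E → (x ∈ A ∨ x ∈ B) ∧ (y ∈ A ∨ y ∈ B) := by
    intro x y hxy
    obtain ⟨a, ha, b, hb, h⟩ := hxy
    rw [Sym2.eq_iff] at h
    rcases h with ⟨rfl, rfl⟩ | ⟨rfl, rfl⟩
    · exact ⟨Or.inl ha, Or.inr hb⟩
    · exact ⟨Or.inr hb, Or.inl ha⟩
  have hadj' : ∀ u v : S, G'.Adj u v ↔ (G.Adj u v ∧ s((u : V), (v : V)) ∉ E) := by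
    intro u v
    exact SimpleGraph.deleteEdges_adj
  have compA : ∀ u : V, u ∉ A → u ∉ B → ∀ a ∈ A, G.Adj u a → ∀ a' ∈ A, G.Adj u a' := by
    intro u h1 h2 a ha hadj a' ha'
    rcases (hhom u h1 h2).1 with h | h
    · exact h a' ha'
    · exact absurd hadj (h a ha)
  have compB : ∀ u : V, u ∉ A → u ∉ B → ∀ b ∈ B, G.Adj u b → ∀ b' ∈ B, G.Adj u b' := by
    intro u h1 h2 b hb hadj b' hb'
    rcases (hhom u h1 h2).2 with h | h
    · exact h b' hb'
    · exact absurd hadj (h b hb)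
  have ha0S : a0 ∈ S := Or.inr (Set.mem_insert _ _)
  have hb0S : b0 ∈ S := Or.inr (Set.mem_insert_of_mem _ rfl)
  have hab0 : a0 ≠ b0 := by
    intro h
    exact (Set.disjoint_left.mp hdisj ha0) (h ▸ hb0)
  apply le_antisymm
  · -- domNum G ≤ domNum G'
    apply domNum_le_of_maps
    · exact ⟨Set.univ, Set.toFinite _, fun v => Or.inl (Set.mem_univ v)⟩
    · intro D' hf' hd'
      refine ⟨Subtype.val '' D', hf'.image _, ?_,
        le_of_eq (Set.ncard_image_of_injective _ Subtype.val_injective)⟩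
      intro v
      by_cases hvA : v ∈ A
      · rcases hd' ⟨a0, ha0S⟩ with hmem | ⟨u, hu, hadj⟩
        · by_cases hva : v = a0
          · exact Or.inl ⟨⟨a0, ha0S⟩, hmem, hva.symm⟩
          · exact Or.inr ⟨a0, ⟨⟨a0, ha0S⟩, hmem, rfl⟩, hAcl ha0 hvA (Ne.symm hva)⟩
        · rw [hadj' u ⟨a0, ha0S⟩] at hadj
          obtain ⟨hGadj, hnE⟩ := hadj
          have huAB : (u : V) ∉ A ∧ (u : V) ∉ B := by
            rcases u.2 with h | h
            · exact h
            · rcases h with h | h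
              · exact absurd h hGadj.ne
              · exfalso
                apply hnE
                refine ⟨a0, ha0, b0, hb0, ?_⟩
                rw [Sym2.eq_iff]
                right
                exact ⟨h, rfl⟩
          exact Or.inr ⟨u, ⟨u, hu, rfl⟩, compA u huAB.1 huAB.2 a0 ha0 hGadj v hvA⟩
      · by_cases hvB : v ∈ B
        · rcases hd' ⟨b0, hb0S⟩ with hmem | ⟨u, hu, hadj⟩
          · by_cases hvb : v = b0
            · exact Or.inl ⟨⟨b0, hb0S⟩, hmem, hvb.symm⟩
            · exact Or.inr ⟨b0, ⟨⟨b0, hb0S⟩, hmem, rfl⟩, hBcl hb0 hvB (Ne.symm hvb)⟩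
          · rw [hadj' u ⟨b0, hb0S⟩] at hadj
            obtain ⟨hGadj, hnE⟩ := hadj
            have huAB : (u : V) ∉ A ∧ (u : V) ∉ B := by
              rcases u.2 with h | h
              · exact h
              · rcases h with h | h
                · exfalso
                  apply hnE
                  refine ⟨a0, ha0, b0, hb0, ?_⟩
                  rw [Sym2.eq_iff]
                  left
                  exact ⟨h, rfl⟩
                · exact absurd h hGadj.ne
            exact Or.inr ⟨u, ⟨u, hu, rfl⟩, compB u huAB.1 huAB.2 b0 hb0 hGadj v hvB⟩
        · have hvS : v ∈ S := Or.inl ⟨hvA, hvB⟩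
          rcases hd' ⟨v, hvS⟩ with hmem | ⟨u, hu, hadj⟩
          · exact Or.inl ⟨⟨v, hvS⟩, hmem, rfl⟩
          · rw [hadj' u ⟨v, hvS⟩] at hadj
            exact Or.inr ⟨u, ⟨u, hu, rfl⟩, hadj.1⟩
  · -- domNum G' ≤ domNum G
    apply domNum_le_of_maps
    · exact ⟨Set.univ, Set.toFinite _, fun v => Or.inl (Set.mem_univ v)⟩
    · intro D hf hd
      set PA : Prop := ∃ a ∈ D, a ∈ A with hPAdef
      set PB : Prop := ∃ b ∈ D, b ∈ B with hPBdef
      set outA : Prop := ∃ u ∈ D, ((u ∉ A ∧ u ∉ B) ∧ G.Adj u a0) with houtAdef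
      set outB : Prop := ∃ u ∈ D, ((u ∉ A ∧ u ∉ B) ∧ G.Adj u b0) with houtBdef
      set Ta : Prop := PA ∨ ¬ outA with hTadef
      set Tb : Prop := PB ∨ ¬ outB with hTbdef
      set sa : S := ⟨a0, ha0S⟩ with hsadef
      set sb : S := ⟨b0, hb0S⟩ with hsbdef
      set X : Set S := {x : S | (x : V) ∈ D ∧ (x : V) ∉ A ∧ (x : V) ∉ B} with hXdef
      set T : Set S := (if Ta then {sa} else ∅) ∪ (if Tb then {sb} else ∅) with hTdef
      refine ⟨X ∪ T, Set.toFinite _, ?_, ?_⟩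
      · -- dominating
        intro v
        have domOut : ∀ hv1 : (v : V) ∉ A, (v : V) ∉ B →
            (v ∈ X ∪ T ∨ ∃ u ∈ X ∪ T, G'.Adj u v) := by
          intro hv1 hv2
          rcases hd v with hmem | ⟨u, hu, hadj⟩
          · exact Or.inl (Or.inl ⟨hmem, hv1, hv2⟩)
          · by_cases huA : u ∈ A
            · have hTa : Ta := Or.inl ⟨u, hu, huA⟩
              have hsaT : sa ∈ X ∪ T := Or.inr (Or.inl (by rw [if_pos hTa]; rfl))
              refine Or.inr ⟨sa, hsaT, ?_⟩
              rw [hadj' sa v]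
              constructor
              · exact (compA v hv1 hv2 u huA hadj.symm a0 ha0).symm
              · intro h
                rcases (factE _ _ h).2 with h' | h'
                · exact hv1 h'
                · exact hv2 h'
            · by_cases huB : u ∈ B
              · have hTb : Tb := Or.inl ⟨u, hu, huB⟩
                have hsbT : sb ∈ X ∪ T := Or.inr (Or.inr (by rw [if_pos hTb]; rfl))
                refine Or.inr ⟨sb, hsbT, ?_⟩
                rw [hadj' sb v]
                constructor
                · exact (compB v hv1 hv2 u huB hadj.symm b0 hb0).symm
                · intro h
                  rcases (factE _ _ h).2 with h' | h'
                  · exact hv1 h'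
                  · exact hv2 h'
              · refine Or.inr ⟨⟨u, Or.inl ⟨huA, huB⟩⟩, Or.inl ⟨hu, huA, huB⟩, ?_⟩
                rw [hadj' _ v]
                constructor
                · exact hadj
                · intro h
                  rcases (factE _ _ h).1 with h' | h'
                  · exact huA h'
                  · exact huB h'
        rcases v.2 with hout | hv0
        · exact domOut hout.1 hout.2
        · rcases hv0 with hv0 | hv0
          · -- v = a0
            have hv : v = sa := Subtype.ext hv0
            by_cases hTa : Ta
            · exact Or.inl (Or.inr (Or.inl (by rw [if_pos hTa, hv]; rfl)))
            · rw [hTadef] at hTa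
              push_neg at hTa
              obtain ⟨u, hu, ⟨huA, huB⟩, hGadj⟩ := hTa.2
              refine Or.inr ⟨⟨u, Or.inl ⟨huA, huB⟩⟩, Or.inl ⟨hu, huA, huB⟩, ?_⟩
              rw [hadj' _ v]
              constructor
              · rw [hv]; exact hGadj
              · rw [hv]
                intro h
                rcases (factE _ _ h).1 with h' | h'
                · exact huA h'
                · exact huB h'
          · -- v = b0
            have hv : v = sb := Subtype.ext hv0
            by_cases hTb : Tb
            · exact Or.inl (Or.inr (Or.inr (by rw [if_pos hTb, hv]; rfl)))
            · rw [hTbdef] at hTb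
              push_neg at hTb
              obtain ⟨u, hu, ⟨huA, huB⟩, hGadj⟩ := hTb.2
              refine Or.inr ⟨⟨u, Or.inl ⟨huA, huB⟩⟩, Or.inl ⟨hu, huA, huB⟩, ?_⟩
              rw [hadj' _ v]
              constructor
              · rw [hv]; exact hGadj
              · rw [hv]
                intro h
                rcases (factE _ _ h).1 with h' | h'
                · exact huA h'
                · exact huB h'
      · -- cardinality
        have hXcard : X.ncard = (D \ (A ∪ B)).ncard := by
          have himg : Subtype.val '' X = D \ (A ∪ B) := by
            ext w
            constructor
            · rintro ⟨x, ⟨hx1, hx2, hx3⟩, rfl⟩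
              exact ⟨hx1, fun h => h.elim hx2 hx3⟩
            · rintro ⟨h1, h2⟩
              exact ⟨⟨w, Or.inl ⟨fun h => h2 (Or.inl h), fun h => h2 (Or.inr h)⟩⟩,
                ⟨h1, fun h => h2 (Or.inl h), fun h => h2 (Or.inr h)⟩, rfl⟩
          rw [← himg, Set.ncard_image_of_injective _ Subtype.val_injective]
        -- helper lemmas about being forced to dominate from the other side
        have hdomA : ¬ PA → ¬ outA → ∀ a ∈ A, ∃ b ∈ D, b ∈ B ∧ G.Adj b a := by
          intro hPA hoA a ha
          rcases hd a with hmem | ⟨u, hu, hadj⟩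
          · exact absurd ⟨a, hmem, ha⟩ hPA
          · by_cases huA : u ∈ A
            · exact absurd ⟨u, hu, huA⟩ hPA
            · by_cases huB : u ∈ B
              · exact ⟨u, hu, huB, hadj⟩
              · exact absurd ⟨u, hu, ⟨huA, huB⟩, compA u huA huB a ha hadj a0 ha0⟩ hoA
        have hdomB : ¬ PB → ¬ outB → ∀ b ∈ B, ∃ a ∈ D, a ∈ A ∧ G.Adj a b := by
          intro hPB hoB b hb
          rcases hd b with hmem | ⟨u, hu, hadj⟩
          · exact absurd ⟨b, hmem, hb⟩ hPB
          · by_cases huB : u ∈ B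
            · exact absurd ⟨u, hu, huB⟩ hPB
            · by_cases huA : u ∈ A
              · exact ⟨u, hu, huA, hadj⟩
              · exact absurd ⟨u, hu, ⟨huA, huB⟩, compB u huA huB b hb hadj b0 hb0⟩ hoB
        have two_of_pair : ∀ x y : V, x ∈ D ∩ (A ∪ B) → y ∈ D ∩ (A ∪ B) → x ≠ y →
            2 ≤ (D ∩ (A ∪ B)).ncard := by
          intro x y hx hy hne
          have hsub : ({x, y} : Set V) ⊆ D ∩ (A ∪ B) := by
            intro z hz
            rcases hz with rfl | rfl
            · exact hx
            · exact hy
          have := Set.ncard_le_ncard hsub (Set.toFinite _)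
          rwa [Set.ncard_pair hne] at this
        have hcard2A : ¬ PA → ¬ outA → 2 ≤ (D ∩ (A ∪ B)).ncard := by
          intro hPA hoA
          obtain ⟨b, hbD, hbB, hba0⟩ := hdomA hPA hoA a0 ha0
          have := hB b hbB
          push_neg at this
          obtain ⟨a', ha', hna'⟩ := this
          obtain ⟨b', hb'D, hb'B, hb'a'⟩ := hdomA hPA hoA a' ha'
          have hne : b ≠ b' := by
            rintro rfl
            exact hna' hb'a'.symm
          exact two_of_pair b b' ⟨hbD, Or.inr hbB⟩ ⟨hb'D, Or.inr hb'B⟩ hne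
        have hcard2B : ¬ PB → ¬ outB → 2 ≤ (D ∩ (A ∪ B)).ncard := by
          intro hPB hoB
          obtain ⟨a, haD, haA, hab0⟩ := hdomB hPB hoB b0 hb0
          have := hA a haA
          push_neg at this
          obtain ⟨b', hb', hnb'⟩ := this
          obtain ⟨a', ha'D, ha'A, ha'b'⟩ := hdomB hPB hoB b' hb'
          have hne : a ≠ a' := by
            rintro rfl
            exact hnb' ha'b'
          exact two_of_pair a a' ⟨haD, Or.inl haA⟩ ⟨ha'D, Or.inl ha'A⟩ hne
        have hTcard : T.ncard ≤ (D ∩ (A ∪ B)).ncard := by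
          by_cases hTa : Ta <;> by_cases hTb : Tb
          · have hT2 : T.ncard ≤ 2 := by
              rw [hTdef, if_pos hTa, if_pos hTb]
              have : ({sa} : Set S) ∪ {sb} = {sa, sb} := by
                rw [Set.union_comm, Set.union_singleton]
              rw [this]
              calc ({sa, sb} : Set S).ncard ≤ ({sb} : Set S).ncard + 1 :=
                    Set.ncard_insert_le _ _
                _ = 2 := by rw [Set.ncard_singleton]
            refine le_trans hT2 ?_
            by_cases hPA : PA
            · by_cases hPB : PB
              · obtain ⟨a, haD, haA⟩ := hPA
                obtain ⟨b, hbD, hbB⟩ := hPB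
                have hne : a ≠ b := by
                  rintro rfl
                  exact (Set.disjoint_left.mp hdisj haA) hbB
                exact two_of_pair a b ⟨haD, Or.inl haA⟩ ⟨hbD, Or.inr hbB⟩ hne
              · have hoB : ¬ outB := by
                  rcases hTb with h | h
                  · exact absurd h hPB
                  · exact h
                exact hcard2B hPB hoB
            · have hoA : ¬ outA := by
                rcases hTa with h | h
                · exact absurd h hPA
                · exact h
              exact hcard2A hPA hoA
          · have hT1 : T.ncard ≤ 1 := by
              rw [hTdef, if_pos hTa, if_neg hTb, Set.union_empty, Set.ncard_singleton]
            refine le_trans hT1 ?_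
            by_cases hPA : PA
            · obtain ⟨a, haD, haA⟩ := hPA
              have : 0 < (D ∩ (A ∪ B)).ncard :=
                (Set.ncard_pos (Set.toFinite _)).mpr ⟨a, haD, Or.inl haA⟩
              omega
            · have hoA : ¬ outA := by
                rcases hTa with h | h
                · exact absurd h hPA
                · exact h
              have := hcard2A hPA hoA
              omega
          · have hT1 : T.ncard ≤ 1 := by
              rw [hTdef, if_neg hTa, if_pos hTb, Set.empty_union, Set.ncard_singleton]
            refine le_trans hT1 ?_
            by_cases hPB : PB
            · obtain ⟨b, hbD, hbB⟩ := hPB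
              have : 0 < (D ∩ (A ∪ B)).ncard :=
                (Set.ncard_pos (Set.toFinite _)).mpr ⟨b, hbD, Or.inr hbB⟩
              omega
            · have hoB : ¬ outB := by
                rcases hTb with h | h
                · exact absurd h hPB
                · exact h
              have := hcard2B hPB hoB
              omega
          · rw [hTdef, if_neg hTa, if_neg hTb, Set.union_empty, Set.ncard_empty]
            omega
        calc (X ∪ T).ncard ≤ X.ncard + T.ncard := Set.ncard_union_le _ _
          _ ≤ (D \ (A ∪ B)).ncard + (D ∩ (A ∪ B)).ncard := by
              rw [hXcard]; exact Nat.add_le_add_left hTcard _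
          _ = D.ncard := by
              rw [Nat.add_comm]
              exact Set.ncard_inter_add_ncard_diff_eq_ncard D (A ∪ B) (Set.toFinite _)
end

section
/- Let (A, B) be a proper W-join of a claw-free graph G, and let G' be obtained from G by removing A and B and adding vertices a, a', b, b', where a, a' are adjacent to all of N(A) \ B, b, b' are adjacent to all of N(B) \ A, and the edges aa', bb', ab are added. Then G' is claw-free. -/
/-- The graph obtained from `G` by removing the W-join sides `A`, `B` and adding four new
vertices `a, a', b, b'` (encoded as `Fin 4`: `0 ↦ a`, `1 ↦ a'`, `2 ↦ b`, `3 ↦ b'`), where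
`a, a'` are joined to `N(A) \ B`, `b, b'` are joined to `N(B) \ A`, and the edges
`aa'`, `bb'`, `ab` are added. -/
def reducedWJoin {V : Type*} (G : SimpleGraph V) (A B : Set V) :
    SimpleGraph ({v : V // v ∉ A ∧ v ∉ B} ⊕ Fin 4) :=
  SimpleGraph.fromRel (fun x y =>
    match x, y with
    | Sum.inl u, Sum.inl v => G.Adj u v
    | Sum.inl u, Sum.inr i =>
        ((i = 0 ∨ i = 1) ∧ ∃ x ∈ A, G.Adj (u : V) x) ∨
        ((i = 2 ∨ i = 3) ∧ ∃ x ∈ B, G.Adj (u : V) x)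
    | Sum.inr _, Sum.inl _ => False
    | Sum.inr i, Sum.inr j => (i = 0 ∧ j = 1) ∨ (i = 2 ∧ j = 3) ∨ (i = 0 ∧ j = 2))

open SimpleGraph

section

variable {V : Type*} {G : SimpleGraph V}

namespace SimpleGraph

structure IsClaw (G : SimpleGraph V) (x p q r : V) : Prop where
  adj₁ : G.Adj x p
  adj₂ : G.Adj x q
  adj₃ : G.Adj x r
  ne₁₂ : p ≠ q
  ne₁₃ : p ≠ r
  ne₂₃ : q ≠ r
  not_adj₁₂ : ¬G.Adj p q
  not_adj₁₃ : ¬G.Adj p r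
  not_adj₂₃ : ¬G.Adj q r

namespace IsClaw

variable {x p q r : V}

theorem swap₁₂ (h : G.IsClaw x p q r) : G.IsClaw x q p r :=
  ⟨h.adj₂, h.adj₁, h.adj₃, h.ne₁₂.symm, h.ne₂₃, h.ne₁₃, mt .symm h.not_adj₁₂, h.not_adj₂₃,
    h.not_adj₁₃⟩

theorem swap₁₃ (h : G.IsClaw x p q r) : G.IsClaw x r q p :=
  ⟨h.adj₃, h.adj₂, h.adj₁, h.ne₂₃.symm, h.ne₁₃.symm, h.ne₁₂.symm, mt .symm h.not_adj₂₃,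
    mt .symm h.not_adj₁₃, mt .symm h.not_adj₁₂⟩

end IsClaw

end SimpleGraph

theorem clawFree_iff_forall_not_isClaw : ClawFree G ↔ ∀ x p q r, ¬G.IsClaw x p q r := by
  refine ⟨fun h x p q r c => ?_, fun h x p q r hp hq hr hpq hpr hqr => ?_⟩
  · rcases h x p q r c.adj₁ c.adj₂ c.adj₃ c.ne₁₂ c.ne₁₃ c.ne₂₃ with h | h | h
    exacts [c.not_adj₁₂ h, c.not_adj₁₃ h, c.not_adj₂₃ h]
  · by_contra! hn
    exact h x p q r ⟨hp, hq, hr, hpq, hpr, hqr, hn.1, hn.2.1, hn.2.2⟩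

theorem exists_adj_iff_adj_of_complete_or_anticomplete {S : Set V} {v a : V}
    (h : (∀ x ∈ S, G.Adj v x) ∨ (∀ x ∈ S, ¬G.Adj v x)) (ha : a ∈ S) :
    (∃ x ∈ S, G.Adj v x) ↔ G.Adj v a :=
  ⟨fun ⟨x, hx, hvx⟩ => h.elim (· a ha) fun h' => (h' x hx hvx).elim, fun hva => ⟨a, ha, hva⟩⟩

theorem exists_adj_and_exists_not_adj {A B : Set V} (hsize : 2 ≤ A.ncard ∨ 2 ≤ B.ncard)
    (hA : ∀ a ∈ A, (∃ b ∈ B, G.Adj a b) ∧ (∃ b ∈ B, ¬ G.Adj a b))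
    (hB : ∀ b ∈ B, (∃ a ∈ A, G.Adj a b) ∧ (∃ a ∈ A, ¬ G.Adj a b)) :
    (∃ a ∈ A, ∃ b ∈ B, G.Adj a b) ∧ (∃ a ∈ A, ∃ b ∈ B, ¬ G.Adj a b) := by
  obtain ⟨a, ha⟩ : A.Nonempty := by
    rcases hsize with h | h
    · exact Set.nonempty_of_ncard_ne_zero (by omega)
    · obtain ⟨b, hb⟩ := Set.nonempty_of_ncard_ne_zero (s := B) (by omega)
      obtain ⟨a, ha, -⟩ := (hB b hb).1
      exact ⟨a, ha⟩
  exact ⟨⟨a, ha, (hA a ha).1⟩, ⟨a, ha, (hA a ha).2⟩⟩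

/-- The path `a' - a - b - b'` on the new vertices of `reducedWJoin`; `i < 2` means that `i` is
on the side of `A`. -/
def wJoinGadget : SimpleGraph (Fin 4) :=
  fromRel fun i j => (i = 0 ∧ j = 1) ∨ (i = 2 ∧ j = 3) ∨ (i = 0 ∧ j = 2)

instance : DecidableRel wJoinGadget.Adj := fun _ _ => decidable_of_iff' _ (fromRel_adj _ _ _)

theorem wJoinGadget_eq_of_adj_of_adj_across :
    ∀ i j k : Fin 4, wJoinGadget.Adj i j → wJoinGadget.Adj i k →
      (i < 2 ↔ ¬j < 2) → (i < 2 ↔ ¬k < 2) → j = k := by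
  decide

theorem wJoinGadget_across_of_adj_twin :
    ∀ i j k : Fin 4, wJoinGadget.Adj i j → (i < 2 ↔ j < 2) → wJoinGadget.Adj i k → j ≠ k →
      ¬wJoinGadget.Adj j k → (i < 2 ↔ ¬k < 2) := by
  decide

def IsHomogeneousOutside (G : SimpleGraph V) (A B : Set V) : Prop :=
  ∀ v : V, v ∉ A → v ∉ B →
    ((∀ a ∈ A, G.Adj v a) ∨ (∀ a ∈ A, ¬ G.Adj v a)) ∧
    ((∀ b ∈ B, G.Adj v b) ∨ (∀ b ∈ B, ¬ G.Adj v b))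

namespace reducedWJoin

variable {A B : Set V}

abbrev Vertex (A B : Set V) : Type _ := {v : V // v ∉ A ∧ v ∉ B} ⊕ Fin 4

theorem adj_inl_inl {u v : {v : V // v ∉ A ∧ v ∉ B}} :
    (reducedWJoin G A B).Adj (.inl u) (.inl v) ↔ G.Adj u v := by
  simp only [reducedWJoin, fromRel_adj, ne_eq, Sum.inl.injEq]
  exact ⟨fun ⟨_, h⟩ => h.elim id .symm, fun h => ⟨fun e => G.ne_of_adj h (congrArg _ e), .inl h⟩⟩

theorem adj_inl_inr {u : {v : V // v ∉ A ∧ v ∉ B}} {i : Fin 4} :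
    (reducedWJoin G A B).Adj (.inl u) (.inr i) ↔
      ((i = 0 ∨ i = 1) ∧ ∃ x ∈ A, G.Adj (u : V) x) ∨
      ((i = 2 ∨ i = 3) ∧ ∃ x ∈ B, G.Adj (u : V) x) := by
  simp [reducedWJoin]

theorem adj_inr_inr {i j : Fin 4} :
    (reducedWJoin G A B).Adj (.inr i) (.inr j) ↔ wJoinGadget.Adj i j := by
  simp [reducedWJoin, wJoinGadget]

def realize (a₀ b₀ : V) : Vertex A B → V :=
  Sum.elim Subtype.val fun i => if i < 2 then a₀ else b₀

section Realize

variable {a₀ b₀ : V}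

theorem across_of_realize_ne {i j : Fin 4}
    (h : realize a₀ b₀ (.inr i : Vertex A B) ≠ realize a₀ b₀ (.inr j : Vertex A B)) :
    i < 2 ↔ ¬j < 2 := by
  contrapose h
  simp only [realize, Sum.elim_inr]
  grind

theorem isLeft_or_isLeft_of_adj_across {i : Fin 4} {p q : Vertex A B}
    (hp : (reducedWJoin G A B).Adj (.inr i) p) (hq : (reducedWJoin G A B).Adj (.inr i) q)
    (hpq : p ≠ q) (hfp : realize a₀ b₀ (.inr i : Vertex A B) ≠ realize a₀ b₀ p)
    (hfq : realize a₀ b₀ (.inr i : Vertex A B) ≠ realize a₀ b₀ q) : p.isLeft ∨ q.isLeft := by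
  rcases p with v | j
  · simp
  rcases q with w | k
  · simp
  rw [adj_inr_inr] at hp hq
  exact absurd (congrArg _ (wJoinGadget_eq_of_adj_of_adj_across i j k hp hq
    (across_of_realize_ne hfp) (across_of_realize_ne hfq))) hpq

theorem coe_ne_realize (ha₀ : a₀ ∈ A) (hb₀ : b₀ ∈ B) {u : {v : V // v ∉ A ∧ v ∉ B}}
    {p : Vertex A B} (h : .inl u ≠ p) : (u : V) ≠ realize a₀ b₀ p := by
  rcases p with v | i
  · exact fun e => h (congrArg _ (Subtype.ext e))
  · simp only [realize, Sum.elim_inr]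
    split_ifs
    exacts [fun e => u.2.1 (e ▸ ha₀), fun e => u.2.2 (e ▸ hb₀)]

variable (hhom : IsHomogeneousOutside G A B) (ha₀ : a₀ ∈ A) (hb₀ : b₀ ∈ B)
include hhom ha₀ hb₀

theorem adj_inl_iff {u : {v : V // v ∉ A ∧ v ∉ B}} {p : Vertex A B} :
    (reducedWJoin G A B).Adj (.inl u) p ↔ G.Adj u (realize a₀ b₀ p) := by
  obtain ⟨huA, huB⟩ := hhom u u.2.1 u.2.2
  rcases p with v | i
  · exact adj_inl_inl
  · rw [adj_inl_inr, exists_adj_iff_adj_of_complete_or_anticomplete huA ha₀,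
      exists_adj_iff_adj_of_complete_or_anticomplete huB hb₀]
    fin_cases i <;> simp [realize]

theorem adj_realize_of_adj (hab : G.Adj a₀ b₀) {x p : Vertex A B}
    (hxp : (reducedWJoin G A B).Adj x p) (hf : realize a₀ b₀ x ≠ realize a₀ b₀ p) :
    G.Adj (realize a₀ b₀ x) (realize a₀ b₀ p) := by
  rcases x with u | i
  · exact (adj_inl_iff hhom ha₀ hb₀).1 hxp
  rcases p with v | j
  · exact ((adj_inl_iff hhom ha₀ hb₀).1 hxp.symm).symm
  rw [adj_inr_inr] at hxp
  revert hxp hf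
  fin_cases i <;> fin_cases j <;> simp [realize, wJoinGadget, hab, hab.symm]

theorem realize_ne_and_not_adj (hne : a₀ ≠ b₀) {x p : Vertex A B}
    (hxp : x ≠ p) (nxp : ¬(reducedWJoin G A B).Adj x p)
    (h : x.isLeft ∨ p.isLeft ∨ ¬G.Adj a₀ b₀) :
    realize a₀ b₀ x ≠ realize a₀ b₀ p ∧ ¬G.Adj (realize a₀ b₀ x) (realize a₀ b₀ p) := by
  rcases x with u | i
  · exact ⟨coe_ne_realize ha₀ hb₀ hxp, mt (adj_inl_iff hhom ha₀ hb₀).2 nxp⟩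
  rcases p with v | j
  · refine ⟨(coe_ne_realize ha₀ hb₀ hxp.symm).symm, fun h => nxp ?_⟩
    exact ((adj_inl_iff hhom ha₀ hb₀).2 h.symm).symm
  simp only [Sum.isLeft_inr, Bool.false_eq_true, false_or] at h
  rw [adj_inr_inr] at nxp
  revert hxp nxp
  fin_cases i <;> fin_cases j <;> simp [realize, wJoinGadget, G.adj_comm b₀ a₀, h, hne, hne.symm]

theorem realize_inr_ne_of_isClaw (hne : a₀ ≠ b₀) {i : Fin 4} {p q r : Vertex A B}
    (h : (reducedWJoin G A B).IsClaw (.inr i) p q r) :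
    realize a₀ b₀ (.inr i : Vertex A B) ≠ realize a₀ b₀ p := by
  intro hfp
  rcases p with u | j
  · exact coe_ne_realize ha₀ hb₀ Sum.inl_ne_inr hfp.symm
  have hside : i < 2 ↔ j < 2 := by
    simp only [realize, Sum.elim_inr] at hfp
    split_ifs at hfp <;> grind
  have twin {v} (hv : (reducedWJoin G A B).Adj (.inr i) (.inl v)) :
      (reducedWJoin G A B).Adj (.inr j) (.inl v) := by
    rw [adj_comm, adj_inl_iff hhom ha₀ hb₀, ← hfp, ← adj_inl_iff hhom ha₀ hb₀, adj_comm]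
    exact hv
  obtain ⟨hp, hq, hr, hpq, hpr, hqr, npq, npr, -⟩ := h
  rcases q with v | k
  · exact npq (twin hq)
  rcases r with w | l
  · exact npr (twin hr)
  rw [adj_inr_inr] at hp hq hr npq npr
  exact hqr (congrArg _ (wJoinGadget_eq_of_adj_of_adj_across i k l hq hr
    (wJoinGadget_across_of_adj_twin i j k hp hside hq (fun e => hpq (congrArg _ e)) npq)
    (wJoinGadget_across_of_adj_twin i j l hp hside hr (fun e => hpr (congrArg _ e)) npr)))

theorem isClaw_realize_of_inl (hne : a₀ ≠ b₀) (hab : ¬G.Adj a₀ b₀)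
    {u : {v : V // v ∉ A ∧ v ∉ B}} {p q r : Vertex A B}
    (h : (reducedWJoin G A B).IsClaw (.inl u) p q r) :
    G.IsClaw u (realize a₀ b₀ p) (realize a₀ b₀ q) (realize a₀ b₀ r) := by
  have leaf {p q : Vertex A B} (hpq : p ≠ q) (npq : ¬(reducedWJoin G A B).Adj p q) :=
    realize_ne_and_not_adj hhom ha₀ hb₀ hne hpq npq (.inr (.inr hab))
  have adj {p : Vertex A B} := (adj_inl_iff (u := u) (p := p) hhom ha₀ hb₀).1
  exact ⟨adj h.adj₁, adj h.adj₂, adj h.adj₃, (leaf h.ne₁₂ h.not_adj₁₂).1,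
    (leaf h.ne₁₃ h.not_adj₁₃).1, (leaf h.ne₂₃ h.not_adj₂₃).1, (leaf h.ne₁₂ h.not_adj₁₂).2,
    (leaf h.ne₁₃ h.not_adj₁₃).2, (leaf h.ne₂₃ h.not_adj₂₃).2⟩

theorem isClaw_realize_of_inr (hab : G.Adj a₀ b₀) {i : Fin 4} {p q r : Vertex A B}
    (h : (reducedWJoin G A B).IsClaw (.inr i) p q r) :
    G.IsClaw (realize a₀ b₀ (.inr i : Vertex A B)) (realize a₀ b₀ p) (realize a₀ b₀ q)
      (realize a₀ b₀ r) := by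
  have hne := G.ne_of_adj hab
  have hfp := realize_inr_ne_of_isClaw hhom ha₀ hb₀ hne h
  have hfq := realize_inr_ne_of_isClaw hhom ha₀ hb₀ hne h.swap₁₂
  have hfr := realize_inr_ne_of_isClaw hhom ha₀ hb₀ hne h.swap₁₃
  have leaf {p q : Vertex A B} (hxp : (reducedWJoin G A B).Adj (.inr i) p)
      (hxq : (reducedWJoin G A B).Adj (.inr i) q)
      (hfp : realize a₀ b₀ (.inr i : Vertex A B) ≠ realize a₀ b₀ p)
      (hfq : realize a₀ b₀ (.inr i : Vertex A B) ≠ realize a₀ b₀ q) (hpq : p ≠ q)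
      (npq : ¬(reducedWJoin G A B).Adj p q) :=
    realize_ne_and_not_adj hhom ha₀ hb₀ hne hpq npq
      (.imp_right .inl (isLeft_or_isLeft_of_adj_across hxp hxq hpq hfp hfq))
  have l₁₂ := leaf h.adj₁ h.adj₂ hfp hfq h.ne₁₂ h.not_adj₁₂
  have l₁₃ := leaf h.adj₁ h.adj₃ hfp hfr h.ne₁₃ h.not_adj₁₃
  have l₂₃ := leaf h.adj₂ h.adj₃ hfq hfr h.ne₂₃ h.not_adj₂₃
  exact ⟨adj_realize_of_adj hhom ha₀ hb₀ hab h.adj₁ hfp,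
    adj_realize_of_adj hhom ha₀ hb₀ hab h.adj₂ hfq, adj_realize_of_adj hhom ha₀ hb₀ hab h.adj₃ hfr,
    l₁₂.1, l₁₃.1, l₂₃.1, l₁₂.2, l₁₃.2, l₂₃.2⟩

end Realize

end reducedWJoin

end

theorem stmt13_general {V : Type*} (G : SimpleGraph V) (A B : Set V)
    (hdisj : Disjoint A B)
    (hhom : ∀ v : V, v ∉ A → v ∉ B →
      ((∀ a ∈ A, G.Adj v a) ∨ (∀ a ∈ A, ¬ G.Adj v a)) ∧
      ((∀ b ∈ B, G.Adj v b) ∨ (∀ b ∈ B, ¬ G.Adj v b)))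
    (hsize : 2 ≤ A.ncard ∨ 2 ≤ B.ncard)
    (hA : ∀ a ∈ A, (∃ b ∈ B, G.Adj a b) ∧ (∃ b ∈ B, ¬ G.Adj a b))
    (hB : ∀ b ∈ B, (∃ a ∈ A, G.Adj a b) ∧ (∃ a ∈ A, ¬ G.Adj a b))
    (hclaw : ClawFree G) :
    ClawFree (reducedWJoin G A B) := by
  rw [clawFree_iff_forall_not_isClaw] at hclaw ⊢
  obtain ⟨⟨a₁, ha₁, b₁, hb₁, hab₁⟩, ⟨a₀, ha₀, b₀, hb₀, hab₀⟩⟩ :=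
    exists_adj_and_exists_not_adj hsize hA hB
  rintro (u | i) p q r h
  · exact hclaw _ _ _ _
      (reducedWJoin.isClaw_realize_of_inl hhom ha₀ hb₀ (hdisj.ne_of_mem ha₀ hb₀) hab₀ h)
  · exact hclaw _ _ _ _ (reducedWJoin.isClaw_realize_of_inr hhom ha₁ hb₁ hab₁ h)

/-- If `(A, B)` is a proper W-join of a claw-free graph `G`, then the reduced graph `G'`
(removing `A`, `B` and adding `a, a', b, b'` as above) is claw-free. -/
theorem stmt13 {V : Type*} (G : SimpleGraph V) (A B : Set V)
    (hdisj : Disjoint A B) (hAcl : G.IsClique A) (hBcl : G.IsClique B)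
    (hhom : ∀ v : V, v ∉ A → v ∉ B →
      ((∀ a ∈ A, G.Adj v a) ∨ (∀ a ∈ A, ¬ G.Adj v a)) ∧
      ((∀ b ∈ B, G.Adj v b) ∨ (∀ b ∈ B, ¬ G.Adj v b)))
    (hsize : 2 ≤ A.ncard ∨ 2 ≤ B.ncard)
    (hA : ∀ a ∈ A, (∃ b ∈ B, G.Adj a b) ∧ (∃ b ∈ B, ¬ G.Adj a b))
    (hB : ∀ b ∈ B, (∃ a ∈ A, G.Adj a b) ∧ (∃ a ∈ A, ¬ G.Adj a b))
    (hclaw : ClawFree G) :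
    ClawFree (reducedWJoin G A B) :=
  stmt13_general G A B hdisj hhom hsize hA hB hclaw
end

section
/- Let G be a graph and z a simplicial vertex with N(z) ≠ ∅. Let γ(G\{z}, N[z]) denote the minimum size of a set dominating all vertices outside N[z] in G \ {z}. Then γ(G\{z}, N[z]) ≤ γ(G \ {z}) ≤ γ(G) ≤ γ(G\{z}, N[z]) + 1. -/
/-- `γ(G, A)`: the minimum size of a set of vertices dominating all vertices outside `A`. -/
noncomputable def domNumRel {V : Type*} (G : SimpleGraph V) (A : Set V) : ℕ :=
  sInf {n | ∃ D : Set V, D.Finite ∧ D.ncard = n ∧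
    ∀ v ∉ A, v ∈ D ∨ ∃ u ∈ D, G.Adj u v}

lemma domNum_spec {V : Type*} [Finite V] (G : SimpleGraph V) :
    ∃ D : Set V, D.Finite ∧ D.ncard = domNum G ∧ Dominating G D := by
  have h : ({n | ∃ D : Set V, D.Finite ∧ D.ncard = n ∧ Dominating G D}).Nonempty :=
    ⟨(Set.univ : Set V).ncard, Set.univ, Set.toFinite _, rfl,
      fun v => Or.inl (Set.mem_univ v)⟩
  obtain ⟨D, h1, h2, h3⟩ := Nat.sInf_mem h
  exact ⟨D, h1, h2, h3⟩

lemma domNumRel_spec {V : Type*} [Finite V] (G : SimpleGraph V) (A : Set V) :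
    ∃ D : Set V, D.Finite ∧ D.ncard = domNumRel G A ∧
      ∀ v ∉ A, v ∈ D ∨ ∃ u ∈ D, G.Adj u v := by
  have h : ({n | ∃ D : Set V, D.Finite ∧ D.ncard = n ∧
      ∀ v ∉ A, v ∈ D ∨ ∃ u ∈ D, G.Adj u v}).Nonempty :=
    ⟨(Set.univ : Set V).ncard, Set.univ, Set.toFinite _, rfl,
      fun v _ => Or.inl (Set.mem_univ v)⟩
  obtain ⟨D, h1, h2, h3⟩ := Nat.sInf_mem h
  exact ⟨D, h1, h2, h3⟩

lemma domNum_le {V : Type*} (G : SimpleGraph V) {D : Set V} (h1 : D.Finite)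
    (h2 : Dominating G D) : domNum G ≤ D.ncard :=
  Nat.sInf_le ⟨D, h1, rfl, h2⟩

lemma domNumRel_le {V : Type*} (G : SimpleGraph V) (A : Set V) {D : Set V} (h1 : D.Finite)
    (h2 : ∀ v ∉ A, v ∈ D ∨ ∃ u ∈ D, G.Adj u v) : domNumRel G A ≤ D.ncard :=
  Nat.sInf_le ⟨D, h1, rfl, h2⟩

/-- For a simplicial non-isolated vertex `z` of a finite graph `G`:
`γ(G∖z, N[z]) ≤ γ(G∖z) ≤ γ(G) ≤ γ(G∖z, N[z]) + 1`. -/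
theorem stmt15 {V : Type*} [Fintype V] (G : SimpleGraph V) (z : V)
    (hsimp : G.IsClique (insert z (G.neighborSet z)))
    (hnz : (G.neighborSet z).Nonempty) :
    domNumRel (G.induce {v : V | v ≠ z}) {v : {v : V // v ≠ z} | G.Adj z ↑v} ≤
        domNum (G.induce {v : V | v ≠ z}) ∧
    domNum (G.induce {v : V | v ≠ z}) ≤ domNum G ∧
    domNum G ≤
      domNumRel (G.induce {v : V | v ≠ z}) {v : {v : V // v ≠ z} | G.Adj z ↑v} + 1 := by
  classical
  obtain ⟨w, hwz⟩ := hnz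
  have hwadj : G.Adj z w := hwz
  have hwne : w ≠ z := fun h => G.irrefl (h ▸ hwadj)
  refine ⟨?_, ?_, ?_⟩
  · -- γ(G', A) ≤ γ(G')
    obtain ⟨D, hfin, hcard, hdom⟩ := domNum_spec (G.induce {v : V | v ≠ z})
    calc domNumRel (G.induce {v : V | v ≠ z}) {v : {v : V // v ≠ z} | G.Adj z ↑v}
        ≤ D.ncard := domNumRel_le _ _ hfin (fun v _ => hdom v)
      _ = _ := hcard
  · -- γ(G') ≤ γ(G)
    obtain ⟨D, hfin, hcard, hdom⟩ := domNum_spec G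
    set E : Set V := if z ∈ D then insert w (D \ {z}) else D with hE
    have hEcard : E.ncard ≤ D.ncard := by
      by_cases hz : z ∈ D
      · rw [hE, if_pos hz]
        calc (insert w (D \ {z})).ncard ≤ (D \ {z}).ncard + 1 :=
              Set.ncard_insert_le _ _
          _ = D.ncard := Set.ncard_diff_singleton_add_one hz hfin
      · rw [hE, if_neg hz]
    have hEfin : E.Finite := Set.toFinite _
    have hEz : ∀ v ∈ E, v ≠ z := by
      intro v hv
      by_cases hz : z ∈ D
      · rw [hE, if_pos hz] at hv
        rcases hv with rfl | hv
        · exact hwne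
        · exact hv.2
      · rw [hE, if_neg hz] at hv
        exact fun h => hz (h ▸ hv)
    set D' : Set {v : V // v ∈ {v : V | v ≠ z}} := Subtype.val ⁻¹' E with hD'
    have himg : Subtype.val '' D' = E := by
      apply Set.Subset.antisymm
      · rintro _ ⟨a, ha, rfl⟩; exact ha
      · intro v hv
        exact ⟨⟨v, hEz v hv⟩, hv, rfl⟩
    have hD'card : D'.ncard = E.ncard := by
      rw [← himg, Set.ncard_image_of_injective _ Subtype.val_injective]
    have hD'dom : Dominating (G.induce {v : V | v ≠ z}) D' := by
      intro v
      have hvz : (v : V) ≠ z := v.2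
      rcases hdom (v : V) with hv | ⟨u, hu, hadj⟩
      · left
        show (v : V) ∈ E
        by_cases hz : z ∈ D
        · rw [hE, if_pos hz]; exact Or.inr ⟨hv, hvz⟩
        · rw [hE, if_neg hz]; exact hv
      · by_cases huz : u = z
        · have hzv : G.Adj z (v : V) := huz ▸ hadj
          have hzD : z ∈ D := huz ▸ hu
          have hwE : w ∈ E := by rw [hE, if_pos hzD]; exact Set.mem_insert _ _
          by_cases hwv : w = (v : V)
          · left; show (v : V) ∈ E; rwa [← hwv]
          · right
            refine ⟨⟨w, hwne⟩, hwE, ?_⟩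
            show G.Adj w (v : V)
            exact hsimp (Set.mem_insert_of_mem _ hwz)
              (Set.mem_insert_of_mem _ hzv) hwv
        · right
          have huE : u ∈ E := by
            by_cases hz : z ∈ D
            · rw [hE, if_pos hz]; exact Or.inr ⟨hu, huz⟩
            · rw [hE, if_neg hz]; exact hu
          exact ⟨⟨u, huz⟩, huE, hadj⟩
    calc domNum (G.induce {v : V | v ≠ z}) ≤ D'.ncard :=
          domNum_le _ (Set.toFinite _) hD'dom
      _ = E.ncard := hD'card
      _ ≤ D.ncard := hEcard
      _ = domNum G := hcard
  · -- γ(G) ≤ γ(G', A) + 1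
    obtain ⟨D, hfin, hcard, hdom⟩ :=
      domNumRel_spec (G.induce {v : V | v ≠ z}) {v : {v : V // v ≠ z} | G.Adj z ↑v}
    set D'' : Set V := insert z (Subtype.val '' D) with hD''
    have hdom'' : Dominating G D'' := by
      intro v
      by_cases hvz : v = z
      · left; rw [hD'', hvz]; exact Set.mem_insert _ _
      · by_cases hadjz : G.Adj z v
        · right; exact ⟨z, Set.mem_insert _ _, hadjz⟩
        · have hvmem : (⟨v, hvz⟩ : {v : V // v ∈ {v : V | v ≠ z}}) ∉
              {v : {v : V // v ≠ z} | G.Adj z ↑v} := hadjz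
          rcases hdom _ hvmem with hv | ⟨u, hu, hadj⟩
          · left; exact Or.inr ⟨_, hv, rfl⟩
          · right
            exact ⟨(u : V), Or.inr ⟨u, hu, rfl⟩, hadj⟩
    calc domNum G ≤ D''.ncard := domNum_le _ (Set.toFinite _) hdom''
      _ ≤ (Subtype.val '' D).ncard + 1 := Set.ncard_insert_le _ _
      _ = D.ncard + 1 := by rw [Set.ncard_image_of_injective _ Subtype.val_injective]
      _ = _ := by rw [hcard]
end

section
/- Let v₁, …, v_n be the vertices of a linear interval (proper interval) graph J in their interval order (i.e., for i < j < k, if v_i is adjacent to v_k then v_j is adjacent to both v_i and v_k). The greedy algorithm that repeatedly takes the undominated vertex of lowest index and adds its neighbor (in the closed neighborhood) of maximum index to the dominating set produces a minimum dominating set of J. -/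
/-- One step of the greedy algorithm: if some vertex is undominated, take the undominated
vertex of lowest index and add to `D` its neighbor (in its closed neighborhood) of
maximum index. -/
def greedyStep {n : ℕ} (J : SimpleGraph (Fin n)) [DecidableRel J.Adj]
    (D : Finset (Fin n)) : Finset (Fin n) :=
  let U : Finset (Fin n) :=
    Finset.univ.filter (fun v => ¬ (v ∈ D ∨ ∃ u ∈ D, J.Adj u v))
  if h : U.Nonempty then
    insert
      ((Finset.univ.filter (fun m => m = U.min' h ∨ J.Adj (U.min' h) m)).max'
        ⟨U.min' h, Finset.mem_filter.2 ⟨Finset.mem_univ _, Or.inl rfl⟩⟩)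
      D
  else D

def greedy {n : ℕ} (J : SimpleGraph (Fin n)) [DecidableRel J.Adj] : Finset (Fin n) :=
  (greedyStep J)^[n] ∅

namespace SimpleGraph

variable {V : Type*} (G : SimpleGraph V)

def closedNbhd (v : V) : Set V := insert v (G.neighborSet v)

variable {G}

theorem mem_closedNbhd {u v : V} : u ∈ G.closedNbhd v ↔ u = v ∨ G.Adj v u := Iff.rfl

theorem mem_closedNbhd_comm {u v : V} : u ∈ G.closedNbhd v ↔ v ∈ G.closedNbhd u := by
  simp only [mem_closedNbhd, eq_comm, G.adj_comm]

theorem disjoint_closedNbhd_of_isGreatest [LinearOrder V]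
    (hord : ∀ i j k : V, i < j → j < k → G.Adj i k → G.Adj i j ∧ G.Adj j k)
    {u x m : V} (hux : u < x) (hm : IsGreatest (G.closedNbhd u) m)
    (hx : x ∉ G.closedNbhd m) : Disjoint (G.closedNbhd u) (G.closedNbhd x) := by
  obtain ⟨hmu, hmax⟩ := hm
  rw [mem_closedNbhd, not_or] at hx
  obtain ⟨hxm, hnadj⟩ := hx
  have hmx : m < x := by
    refine lt_of_le_of_ne (not_lt.1 fun hxm_lt => hnadj ?_) (Ne.symm hxm)
    rcases hmu with rfl | hum
    · exact absurd (hux.trans hxm_lt) (lt_irrefl _)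
    · exact G.adj_symm (hord u x m hux hxm_lt hum).2
  refine Set.disjoint_left.2 fun w hwu hwx => ?_
  have hwx_adj : G.Adj w x := G.adj_symm (hwx.resolve_left ((hmax hwu).trans_lt hmx).ne)
  rcases (hmax hwu).lt_or_eq with hwm | rfl
  · exact hnadj (hord w m x hwm hmx hwx_adj).2
  · exact hnadj hwx_adj

end SimpleGraph

open SimpleGraph

section Domination

variable {V : Type*} {G : SimpleGraph V}

theorem dominating_iff {D : Set V} : Dominating G D ↔ ∀ v, ∃ u ∈ D, v ∈ G.closedNbhd u := by
  simp [Dominating, mem_closedNbhd, and_or_left, exists_or]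

/-- Each vertex of a packing `T` needs its own dominator in its closed neighbourhood. -/
theorem Dominating.card_le_ncard {S : Set V} {T : Finset V} (hS : Dominating G S)
    (hSf : S.Finite) (hT : (T : Set V).PairwiseDisjoint G.closedNbhd) : T.card ≤ S.ncard := by
  choose f hfS hf using dominating_iff.1 hS
  rw [← Set.ncard_coe_finset]
  refine Set.ncard_le_ncard_of_injOn f (fun u _ => hfS u) (fun a ha b hb hab => ?_) hSf
  by_contra hne
  refine Set.disjoint_left.1 (hT ha hb hne) (mem_closedNbhd_comm.1 (hf a)) ?_
  exact hab ▸ mem_closedNbhd_comm.1 (hf b)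

theorem Dominating.card_eq_domNum {D T : Finset V} (hD : Dominating G D)
    (hT : (T : Set V).PairwiseDisjoint G.closedNbhd) (hcard : T.card = D.card) :
    D.card = domNum G := by
  have hmem : D.card ∈ {k | ∃ S : Set V, S.Finite ∧ S.ncard = k ∧ Dominating G S} :=
    ⟨D, D.finite_toSet, Set.ncard_coe_finset D, hD⟩
  refine le_antisymm (le_csInf ⟨_, hmem⟩ ?_) (Nat.sInf_le hmem)
  rintro _ ⟨S, hSf, rfl, hS⟩
  exact hcard ▸ hS.card_le_ncard hSf hT

end Domination

section Greedy

variable {n : ℕ} (J : SimpleGraph (Fin n)) [DecidableRel J.Adj]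

def undominated (D : Finset (Fin n)) : Finset (Fin n) :=
  Finset.univ.filter (fun v => ¬ (v ∈ D ∨ ∃ u ∈ D, J.Adj u v))

def maxNbr (x : Fin n) : Fin n :=
  (Finset.univ.filter (fun m => m = x ∨ J.Adj x m)).max'
    ⟨x, Finset.mem_filter.2 ⟨Finset.mem_univ _, Or.inl rfl⟩⟩

/-- `T` is the set of pivots of the greedy run that produced `D`; by `Dominating.card_le_ncard`
it certifies that `D` is optimal. -/
structure IsGreedyWitness (D T : Finset (Fin n)) : Prop where
  card_eq : T.card = D.card
  pairwiseDisjoint : (T : Set (Fin n)).PairwiseDisjoint J.closedNbhd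
  maxNbr_mem : ∀ u ∈ T, maxNbr J u ∈ D
  notMem_undominated : ∀ u ∈ T, ∀ v ≤ u, v ∉ undominated J D

variable {J}

theorem mem_undominated {D : Finset (Fin n)} {v : Fin n} :
    v ∈ undominated J D ↔ ¬ ∃ u ∈ D, v ∈ J.closedNbhd u := by
  simp only [undominated, Finset.mem_filter, Finset.mem_univ, true_and, mem_closedNbhd]
  grind

theorem undominated_anti {D D' : Finset (Fin n)} (h : D ⊆ D') :
    undominated J D' ⊆ undominated J D := fun _ hv =>
  mem_undominated.2 fun ⟨u, hu, hvu⟩ => mem_undominated.1 hv ⟨u, h hu, hvu⟩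

theorem isGreatest_maxNbr (x : Fin n) : IsGreatest (J.closedNbhd x) (maxNbr J x) := by
  have hmem {m : Fin n} : m ∈ Finset.univ.filter (fun m => m = x ∨ J.Adj x m) ↔
      m ∈ J.closedNbhd x := by
    simp [mem_closedNbhd]
  exact ⟨hmem.1 (Finset.max'_mem _ _), fun m hm => Finset.le_max' _ _ (hmem.2 hm)⟩

theorem greedyStep_of_nonempty {D : Finset (Fin n)} (h : (undominated J D).Nonempty) :
    greedyStep J D = insert (maxNbr J ((undominated J D).min' h)) D :=
  dif_pos h

theorem greedyStep_of_empty {D : Finset (Fin n)} (h : undominated J D = ∅) :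
    greedyStep J D = D :=
  dif_neg (Finset.not_nonempty_iff_eq_empty.2 h)

theorem mem_closedNbhd_maxNbr (x : Fin n) : x ∈ J.closedNbhd (maxNbr J x) :=
  mem_closedNbhd_comm.1 (isGreatest_maxNbr x).1

theorem IsGreedyWitness.greedyStep
    (hord : ∀ i j k : Fin n, i < j → j < k → J.Adj i k → J.Adj i j ∧ J.Adj j k)
    {D T : Finset (Fin n)} (hW : IsGreedyWitness J D T) (h : (undominated J D).Nonempty) :
    IsGreedyWitness J (greedyStep J D) (insert ((undominated J D).min' h) T) := by
  set x := (undominated J D).min' h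
  have hx : x ∈ undominated J D := Finset.min'_mem _ h
  have hxT : x ∉ T := fun hxT => hW.notMem_undominated x hxT x le_rfl hx
  have hmD : maxNbr J x ∉ D := fun hmD => mem_undominated.1 hx ⟨_, hmD, mem_closedNbhd_maxNbr x⟩
  have hlt : ∀ u ∈ T, u < x := fun u hu =>
    not_le.1 fun hxu => hW.notMem_undominated u hu x hxu hx
  have hsub : D ⊆ insert (maxNbr J x) D := Finset.subset_insert _ _
  rw [greedyStep_of_nonempty h]
  refine ⟨?_, ?_, ?_, ?_⟩
  · rw [Finset.card_insert_of_notMem hxT, Finset.card_insert_of_notMem hmD, hW.card_eq]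
  · rw [Finset.coe_insert]
    refine hW.pairwiseDisjoint.insert fun u hu _ => Disjoint.symm ?_
    refine disjoint_closedNbhd_of_isGreatest hord (hlt u hu) (isGreatest_maxNbr u) fun hxm => ?_
    exact mem_undominated.1 hx ⟨_, hW.maxNbr_mem u hu, hxm⟩
  · intro u hu
    rcases Finset.mem_insert.1 hu with rfl | hu
    · exact Finset.mem_insert_self _ _
    · exact hsub (hW.maxNbr_mem u hu)
  · intro u hu v hvu hv
    rcases Finset.mem_insert.1 hu with rfl | hu
    · rcases hvu.lt_or_eq with hvx | rfl
      · exact (Finset.min'_le _ v (undominated_anti hsub hv)).not_gt hvx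
      · exact mem_undominated.1 hv ⟨_, Finset.mem_insert_self _ _, mem_closedNbhd_maxNbr _⟩
    · exact hW.notMem_undominated u hu v hvu (undominated_anti hsub hv)

theorem exists_isGreedyWitness_iterate
    (hord : ∀ i j k : Fin n, i < j → j < k → J.Adj i k → J.Adj i j ∧ J.Adj j k) (t : ℕ) :
    ∃ T, IsGreedyWitness J ((greedyStep J)^[t] ∅) T := by
  induction t with
  | zero => exact ⟨∅, by simp, by simp, by simp, by simp⟩
  | succ t ih =>
    obtain ⟨T, hW⟩ := ih
    rw [Function.iterate_succ_apply']
    by_cases h : (undominated J ((greedyStep J)^[t] ∅)).Nonempty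
    · exact ⟨_, hW.greedyStep hord h⟩
    · rw [greedyStep_of_empty (Finset.not_nonempty_iff_eq_empty.1 h)]
      exact ⟨T, hW⟩

theorem card_undominated_greedyStep_lt {D : Finset (Fin n)} (h : (undominated J D).Nonempty) :
    (undominated J (greedyStep J D)).card < (undominated J D).card := by
  rw [greedyStep_of_nonempty h]
  refine Finset.card_lt_card <| (Finset.ssubset_iff_of_subset <|
    undominated_anti <| Finset.subset_insert _ _).2 ⟨_, Finset.min'_mem _ h, fun hx => ?_⟩
  exact mem_undominated.1 hx ⟨_, Finset.mem_insert_self _ _, mem_closedNbhd_maxNbr _⟩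

theorem card_undominated_iterate_le (t : ℕ) :
    (undominated J ((greedyStep J)^[t] ∅)).card ≤ n - t := by
  induction t with
  | zero => simpa using Finset.card_le_univ (undominated J ∅)
  | succ t ih =>
    rw [Function.iterate_succ_apply']
    by_cases h : (undominated J ((greedyStep J)^[t] ∅)).Nonempty
    · have := card_undominated_greedyStep_lt h
      omega
    · rw [Finset.not_nonempty_iff_eq_empty] at h
      simp [greedyStep_of_empty h, h]

theorem dominating_greedy : Dominating J (greedy J : Set (Fin n)) := by
  have hempty : undominated J (greedy J) = ∅ := by
    simpa [greedy] using card_undominated_iterate_le (J := J) n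
  refine dominating_iff.2 fun v => ?_
  by_contra hv
  have hv : v ∈ undominated J (greedy J) := mem_undominated.2 (by simpa using hv)
  simp [hempty] at hv

end Greedy

/-- If `v₁, …, v_n` is a linear interval (proper interval) order of the vertices of `J`
(for `i < j < k`, adjacency of `v_i, v_k` implies `v_j` is adjacent to both), then the
greedy algorithm produces a minimum dominating set of `J`. -/
theorem stmt16 {n : ℕ} (J : SimpleGraph (Fin n)) [DecidableRel J.Adj]
    (hord : ∀ i j k : Fin n, i < j → j < k → J.Adj i k → J.Adj i j ∧ J.Adj j k) :
    Dominating J (↑(greedy J) : Set (Fin n)) ∧ (greedy J).card = domNum J := by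
  obtain ⟨T, hW⟩ := exists_isGreedyWitness_iterate hord n
  exact ⟨dominating_greedy, dominating_greedy.card_eq_domNum hW.pairwiseDisjoint hW.card_eq⟩
end

section
/- Let G be a claw-free graph and let z be a simplicial vertex of G. If (A, B) is a proper W-join of G, then z ∉ A ∪ B. -/
/-- In a claw-free graph, a simplicial vertex `z` belongs to neither side of a proper
W-join `(A, B)`. -/
theorem stmt17 {V : Type*} (G : SimpleGraph V) (hclaw : ClawFree G) (z : V)
    (hsimp : G.IsClique (insert z (G.neighborSet z)))
    (A B : Set V) (hdisj : Disjoint A B) (hAcl : G.IsClique A) (hBcl : G.IsClique B)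
    (hhom : ∀ v : V, v ∉ A → v ∉ B →
      ((∀ a ∈ A, G.Adj v a) ∨ (∀ a ∈ A, ¬ G.Adj v a)) ∧
      ((∀ b ∈ B, G.Adj v b) ∨ (∀ b ∈ B, ¬ G.Adj v b)))
    (hsize : 2 ≤ A.ncard ∨ 2 ≤ B.ncard)
    (hA : ∀ a ∈ A, (∃ b ∈ B, G.Adj a b) ∧ (∃ b ∈ B, ¬ G.Adj a b))
    (hB : ∀ b ∈ B, (∃ a ∈ A, G.Adj a b) ∧ (∃ a ∈ A, ¬ G.Adj a b)) :
    z ∉ A ∪ B := by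
  rintro (hz | hz)
  · obtain ⟨⟨b1, hb1, hzb1⟩, -⟩ := hA z hz
    obtain ⟨-, a', ha', ha'b1⟩ := hB b1 hb1
    have hne : a' ≠ z := by rintro rfl; exact ha'b1 hzb1
    have hza' : G.Adj z a' := hAcl hz ha' (Ne.symm hne)
    have hab : a' ≠ b1 := fun h => (Set.disjoint_left.mp hdisj (h ▸ ha')) hb1
    exact ha'b1 (hsimp (Set.mem_insert_of_mem z hza') (Set.mem_insert_of_mem z hzb1) hab)
  · obtain ⟨⟨a1, ha1, ha1z⟩, -⟩ := hB z hz
    obtain ⟨-, b', hb', ha1b'⟩ := hA a1 ha1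
    have hne : b' ≠ z := by rintro rfl; exact ha1b' ha1z
    have hzb' : G.Adj z b' := hBcl hz hb' (Ne.symm hne)
    have hab : a1 ≠ b' := fun h => (Set.disjoint_left.mp hdisj ha1) (h ▸ hb')
    exact ha1b' (hsimp (Set.mem_insert_of_mem z ha1z.symm) (Set.mem_insert_of_mem z hzb') hab)
end
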